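/- arXiv:1209.2181 — 2 statements merged into one kernel-verified Lean document; each statement's English description precedes it below -/
import Mathlib

section
/- In the admissible-family setting, let f ∈ L¹(ν×θ) be invariant for the Γ-action on B×ℝ given by g·(b,t) = (gb, t + R(g,b)) (i.e. f(g·(b,t)) = f(b,t) for every g ∈ Γ and (ν×θ)-a.e. (b,t)). Then lim_{n→∞} ‖f − Z_n f‖₁ = 0. -/
open MeasureTheory Filter Set
open scoped ENNReal

/-- The Radon–Nikodym derivative `dν∘g/dν` of the action `a`, where
`(ν∘g)(A) = ν(g • A)`, i.e. the derivative of the pushforward of `ν` by `a g⁻¹`. -/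
noncomputable def rnD {Γ B : Type} [Group Γ] [MeasurableSpace B] (a : Γ → B → B)
    (ν : Measure B) (g : Γ) : B → ℝ≥0∞ :=
  (ν.map (a g⁻¹)).rnDeriv ν

/-- A nonsingular Borel action of `Γ` on `(B,ν)`. -/
def IsNonsingularAction {Γ B : Type} [Group Γ] [MeasurableSpace B] (a : Γ → B → B)
    (ν : Measure B) : Prop :=
  (∀ g : Γ, Measurable (a g)) ∧ (∀ b : B, a 1 b = b) ∧
    (∀ (g h : Γ) (b : B), a (g * h) b = a g (a h b)) ∧
    (∀ g : Γ, ν.map (a g) ≪ ν ∧ ν ≪ ν.map (a g))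

/-- The ratio set `RS(Γ ↷ (B,ν)) ⊆ [0,∞]`. -/
def ratioSet {Γ B : Type} [Group Γ] [MeasurableSpace B] (a : Γ → B → B) (ν : Measure B) :
    Set ℝ≥0∞ :=
  {t | (t ≠ ∞ ∧
      ∀ A : Set B, MeasurableSet A → 0 < ν A → ∀ ε : ℝ, 0 < ε →
        ∃ A' : Set B, A' ⊆ A ∧ MeasurableSet A' ∧ 0 < ν A' ∧
          ∃ g : Γ, g ≠ 1 ∧ (∀ b ∈ A', a g b ∈ A) ∧
            (∀ᵐ b ∂ν, b ∈ A' → rnD a ν g b ≠ ∞ ∧ |(rnD a ν g b).toReal - t.toReal| < ε)) ∨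
    (t = ∞ ∧
      ∀ A : Set B, MeasurableSet A → 0 < ν A → ∀ n : ℝ, 0 < n →
        ∃ A' : Set B, A' ⊆ A ∧ MeasurableSet A' ∧ 0 < ν A' ∧
          ∃ g : Γ, g ≠ 1 ∧ (∀ b ∈ A', a g b ∈ A) ∧
            (∀ᵐ b ∂ν, b ∈ A' → ENNReal.ofReal n < rnD a ν g b))}

/-- An admissible family of integral kernels for the nonsingular action `a` of `Γ`
on `(B,ν)`, with logarithmic Radon–Nikodym cocycle `R`; `C` is the uniform bound of
condition (3). -/
def IsAdmissibleFamily {Γ B : Type} [Group Γ] [MetricSpace B] [MeasurableSpace B]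
    (a : Γ → B → B) (ν : Measure B) (R : Γ → B → ℝ)
    (Υ : ℕ → Γ → B → B → ℝ) (C : ℝ) : Prop :=
  0 < C ∧
  (∀ (n : ℕ) (g : Γ) (b b' : B), 0 ≤ Υ n g b b') ∧
  (∀ (n : ℕ) (g : Γ), Measurable (fun p : B × B => Υ n g p.1 p.2)) ∧
  -- (1) each `Υ n (·, b, ·)` is a probability density
  (∀ (n : ℕ) (b : B), ∑' g : Γ, ∫⁻ b', ENNReal.ofReal (Υ n g b b') ∂ν = 1) ∧
  -- (2) supports shrink
  (∃ β : ℕ → ℝ, Tendsto β atTop (nhds 0) ∧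
    ∀ (n : ℕ) (g : Γ) (b b' : B), 0 < Υ n g b b' →
      dist b b' ≤ β n ∧ dist (a g⁻¹ b) (a g⁻¹ b') ≤ β n) ∧
  -- (3) uniform bound on the cocycle on the support
  (∀ (n : ℕ) (g : Γ), ∀ᵐ b ∂ν, ∀ᵐ b' ∂ν, 0 < Υ n g b b' →
      |R g⁻¹ b| + |R g⁻¹ b'| ≤ C) ∧
  -- (4) uniform integral bounds
  (∃ C₄ : ℝ, 0 < C₄ ∧
    (∀ n : ℕ, ∀ᵐ b' ∂ν,
      ∫⁻ b, ∑' g : Γ, ENNReal.ofReal (Υ n g b b') ∂ν ≤ ENNReal.ofReal C₄) ∧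
    (∀ n : ℕ, ∀ᵐ b' ∂ν,
      ∫⁻ b, ∑' g : Γ, ENNReal.ofReal (Υ n g b (a g b')) * rnD a ν g b' ∂ν
        ≤ ENNReal.ofReal C₄) ∧
    (∀ n : ℕ, ∀ᵐ b ∂ν,
      ∫⁻ b', ∑' g : Γ, ENNReal.ofReal (Υ n g (a g b) b') * rnD a ν g b ∂ν
        ≤ ENNReal.ofReal C₄))

/-- The operator `W_n`: `(W_n f)(b,t) = Σ_g ∫ f(b',t) Υ_n(g,b,b') dν(b')`. -/
noncomputable def Wop {Γ B : Type} [MeasurableSpace B] (ν : Measure B)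
    (Υ : ℕ → Γ → B → B → ℝ) (n : ℕ) (f : B × ℝ → ℝ) (p : B × ℝ) : ℝ :=
  ∑' g : Γ, ∫ b', f (b', p.2) * Υ n g p.1 b' ∂ν

/-- The operator `X_n`: `(X_n f)(b,t) = Σ_g ∫ f(g⁻¹b', t + R(g⁻¹,b')) Υ_n(g,b,b') dν(b')`. -/
noncomputable def Xop {Γ B : Type} [Group Γ] [MeasurableSpace B] (a : Γ → B → B)
    (ν : Measure B) (R : Γ → B → ℝ) (Υ : ℕ → Γ → B → B → ℝ) (n : ℕ)
    (f : B × ℝ → ℝ) (p : B × ℝ) : ℝ :=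
  ∑' g : Γ, ∫ b', f (a g⁻¹ b', p.2 + R g⁻¹ b') * Υ n g p.1 b' ∂ν

/-- The operator `Y_n`: `(Y_n f)(b,t) = Σ_g ∫ f(g⁻¹b, t + R(g⁻¹,b')) Υ_n(g,b,b') dν(b')`. -/
noncomputable def Yop {Γ B : Type} [Group Γ] [MeasurableSpace B] (a : Γ → B → B)
    (ν : Measure B) (R : Γ → B → ℝ) (Υ : ℕ → Γ → B → B → ℝ) (n : ℕ)
    (f : B × ℝ → ℝ) (p : B × ℝ) : ℝ :=
  ∑' g : Γ, ∫ b', f (a g⁻¹ p.1, p.2 + R g⁻¹ b') * Υ n g p.1 b' ∂ν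

/-- The operator `Z_n`:
`(Z_n f)(b,t) = Σ_g ∫ f(b, t + R(g⁻¹,b') − R(g⁻¹,b)) Υ_n(g,b,b') dν(b')`. -/
noncomputable def Zop {Γ B : Type} [Group Γ] [MeasurableSpace B] (a : Γ → B → B)
    (ν : Measure B) (R : Γ → B → ℝ) (Υ : ℕ → Γ → B → B → ℝ) (n : ℕ)
    (f : B × ℝ → ℝ) (p : B × ℝ) : ℝ :=
  ∑' g : Γ, ∫ b', f (p.1, p.2 + R g⁻¹ b' - R g⁻¹ p.1) * Υ n g p.1 b' ∂ν



/-!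
Write `κ n g := kernelMeasure ν θ (Υ n g)`, the measure `Υ_n(g,b,b') dν(b) dθ(t) dν(b')`. Since
`Σ_g ∫ Υ_n(g,b,·) dν = 1`, the value `f(b,t) − Z_n f(b,t)` is an average of
`f(b,t) − f(b, t + R(g⁻¹,b') − R(g⁻¹,b))`, so `‖f − Z_n f‖₁` is at most the `Σ_g κ n g`-integral
of its absolute value. Invariance of `f` turns this difference into `f(b,t) − f(b',t)` plus
`f(g⁻¹b', s) − f(g⁻¹b, s)` with `s = t + R(g⁻¹,b')`. In both terms the two points are
`β(n)`-close on the support of `κ n g`, and every map involved pushes `Σ_g κ n g` forward to at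
most a fixed multiple of `ν × θ`: by condition (1) or (4), after a change of variables along `g⁻¹`,
and because the translates of `θ` by at most `C` have bounded density. Replacing `f` by a uniformly
continuous compactly supported function up to a small `L¹` error then shows that both terms tend
to zero.
-/

open Topology

section Pushforward

variable {ι Q E : Type*} [MeasurableSpace Q] [MeasurableSpace E]
  {κ : ι → Measure Q} {x y : ι → Q → E} {μ : Measure E} {c : ℝ≥0∞}

lemma tsum_lintegral_comp_le_of_sum_map_le (hx : ∀ i, Measurable (x i))
    (h : Measure.sum (fun i => (κ i).map (x i)) ≤ c • μ) {φ : E → ℝ≥0∞} (hφ : Measurable φ) :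
    ∑' i, ∫⁻ q, φ (x i q) ∂κ i ≤ c * ∫⁻ p, φ p ∂μ := by
  calc ∑' i, ∫⁻ q, φ (x i q) ∂κ i = ∫⁻ p, φ p ∂Measure.sum (fun i => (κ i).map (x i)) := by
        rw [lintegral_sum_measure]
        exact tsum_congr fun i => (lintegral_map hφ (hx i)).symm
    _ ≤ ∫⁻ p, φ p ∂(c • μ) := lintegral_mono' h le_rfl
    _ = c * ∫⁻ p, φ p ∂μ := lintegral_smul_measure c φ

lemma sum_map_le_of_tsum_lintegral_le (hx : ∀ i, Measurable (x i))
    (h : ∀ φ : E → ℝ≥0∞, Measurable φ → ∑' i, ∫⁻ q, φ (x i q) ∂κ i ≤ c * ∫⁻ p, φ p ∂μ) :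
    Measure.sum (fun i => (κ i).map (x i)) ≤ c • μ := by
  refine Measure.le_iff.2 fun s hs => ?_
  have := h (s.indicator 1) (measurable_one.indicator hs)
  simp only [lintegral_indicator_one hs] at this
  rw [Measure.sum_apply _ hs, Measure.smul_apply, smul_eq_mul]
  refine le_of_eq_of_le (tsum_congr fun i => ?_) this
  rw [Measure.map_apply (hx i) hs, ← lintegral_indicator_one (hx i hs)]
  rfl

lemma ae_comp_of_sum_map_le (hx : ∀ i, Measurable (x i))
    (h : Measure.sum (fun i => (κ i).map (x i)) ≤ c • μ) {P : E → Prop} (hP : ∀ᵐ p ∂μ, P p)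
    (i : ι) : ∀ᵐ q ∂κ i, P (x i q) :=
  ae_of_ae_map (hx i).aemeasurable <|
    (Measure.absolutelyContinuous_of_le_smul ((Measure.le_sum _ i).trans h)).ae_le hP

lemma tsum_lintegral_enorm_sub_comp_le (hx : ∀ i, Measurable (x i)) (hy : ∀ i, Measurable (y i))
    {cx cy : ℝ≥0∞} (hxμ : Measure.sum (fun i => (κ i).map (x i)) ≤ cx • μ)
    (hyμ : Measure.sum (fun i => (κ i).map (y i)) ≤ cy • μ) {f h : E → ℝ} (hfm : Measurable f)
    (hhm : Measurable h) {d : ℝ≥0∞} (hd : ∀ i, ∀ᵐ q ∂κ i, ‖h (x i q) - h (y i q)‖ₑ ≤ d) :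
    ∑' i, ∫⁻ q, ‖f (x i q) - f (y i q)‖ₑ ∂κ i ≤
      cx * (d * μ univ + ∫⁻ p, ‖f p - h p‖ₑ ∂μ) + cy * ∫⁻ p, ‖f p - h p‖ₑ ∂μ := by
  have he : Measurable fun p => f p - h p := hfm.sub hhm
  have hpoint : ∀ i, ∀ᵐ q ∂κ i, ‖f (x i q) - f (y i q)‖ₑ ≤
      (d + ‖f (x i q) - h (x i q)‖ₑ) + ‖f (y i q) - h (y i q)‖ₑ := fun i =>
    (hd i).mono fun q hq => calc
      ‖f (x i q) - f (y i q)‖ₑ = ‖(h (x i q) - h (y i q)) + (f (x i q) - h (x i q))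
          - (f (y i q) - h (y i q))‖ₑ := by ring_nf
      _ ≤ ‖h (x i q) - h (y i q)‖ₑ + ‖f (x i q) - h (x i q)‖ₑ + ‖f (y i q) - h (y i q)‖ₑ :=
          enorm_sub_le.trans (by gcongr; exact enorm_add_le _ _)
      _ ≤ _ := by gcongr
  calc ∑' i, ∫⁻ q, ‖f (x i q) - f (y i q)‖ₑ ∂κ i
      ≤ ∑' i, ∫⁻ q, ((d + ‖f (x i q) - h (x i q)‖ₑ) + ‖f (y i q) - h (y i q)‖ₑ) ∂κ i :=
        ENNReal.tsum_le_tsum fun i => lintegral_mono_ae (hpoint i)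
    _ = ∑' i, ∫⁻ q, (d + ‖f (x i q) - h (x i q)‖ₑ) ∂κ i
          + ∑' i, ∫⁻ q, ‖f (y i q) - h (y i q)‖ₑ ∂κ i := by
        rw [← ENNReal.tsum_add]
        exact tsum_congr fun i => lintegral_add_right _ (he.enorm.comp (hy i))
    _ ≤ cx * ∫⁻ p, (d + ‖f p - h p‖ₑ) ∂μ + cy * ∫⁻ p, ‖f p - h p‖ₑ ∂μ :=
        add_le_add (tsum_lintegral_comp_le_of_sum_map_le hx hxμ (he.enorm.const_add d))
          (tsum_lintegral_comp_le_of_sum_map_le hy hyμ he.enorm)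
    _ = _ := by rw [lintegral_add_left measurable_const, lintegral_const]

end Pushforward

lemma tendsto_tsum_lintegral_enorm_sub_comp_of_dist_le {ι Q E : Type*}
    [MeasurableSpace Q] [MetricSpace E] [MeasurableSpace E] [BorelSpace E]
    [WeaklyLocallyCompactSpace E] {μ : Measure E} [IsFiniteMeasure μ] [μ.Regular]
    {κ : ℕ → ι → Measure Q} {x y : ℕ → ι → Q → E} (hxm : ∀ n i, Measurable (x n i))
    (hym : ∀ n i, Measurable (y n i)) {cx cy : ℝ≥0∞} (hcx : cx ≠ ∞) (hcy : cy ≠ ∞)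
    (hx : ∀ n, Measure.sum (fun i => (κ n i).map (x n i)) ≤ cx • μ)
    (hy : ∀ n, Measure.sum (fun i => (κ n i).map (y n i)) ≤ cy • μ)
    {β : ℕ → ℝ} (hβ : Tendsto β atTop (𝓝 0))
    (hdist : ∀ n i, ∀ᵐ q ∂κ n i, dist (x n i q) (y n i q) ≤ β n)
    {f : E → ℝ} (hfm : Measurable f) (hf : Integrable f μ) :
    Tendsto (fun n => ∑' i, ∫⁻ q, ‖f (x n i q) - f (y n i q)‖ₑ ∂κ n i) atTop (𝓝 0) := by
  set K := cx * (μ univ + 1) + cy + 1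
  have hK : K ≠ ∞ := by finiteness
  refine ENNReal.tendsto_nhds_zero.2 fun ε hε => ?_
  obtain ⟨d, hd0, hdε⟩ := ENNReal.exists_pos_mul_lt hK hε.ne'
  have hd : d ≠ ∞ := by
    rintro rfl
    simp [K] at hdε
  obtain ⟨h, hh_supp, hfh, hh_cont, -⟩ := hf.exists_hasCompactSupport_lintegral_sub_le hd0.ne'
  obtain ⟨δ, hδ, hhδ⟩ := Metric.uniformContinuous_iff.1
    (hh_supp.uniformContinuous_of_continuous hh_cont) d.toReal (ENNReal.toReal_pos hd0.ne' hd)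
  filter_upwards [hβ.eventually (eventually_lt_nhds hδ)] with n hn
  have hhd : ∀ i, ∀ᵐ q ∂κ n i, ‖h (x n i q) - h (y n i q)‖ₑ ≤ d := fun i =>
    (hdist n i).mono fun q hq => by
      rw [← ENNReal.ofReal_toReal hd, ← ofReal_norm, ← dist_eq_norm]
      exact ENNReal.ofReal_le_ofReal (hhδ (hq.trans_lt hn)).le
  calc ∑' i, ∫⁻ q, ‖f (x n i q) - f (y n i q)‖ₑ ∂κ n i
      ≤ cx * (d * μ univ + d) + cy * d := by
        refine (tsum_lintegral_enorm_sub_comp_le (hxm n) (hym n) (hx n) (hy n) hfm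
          hh_cont.measurable hhd).trans ?_
        gcongr
    _ = d * (cx * (μ univ + 1) + cy) := by ring
    _ ≤ d * K := by gcongr; exact le_self_add
    _ ≤ ε := hdε.le

lemma enorm_sub_tsum_integral_mul_le {ι Y : Type*} [MeasurableSpace Y]
    {ν : Measure Y} {w : ι → Y → ℝ} (hw0 : ∀ i y, 0 ≤ w i y) (hwm : ∀ i, Measurable (w i))
    (hw1 : ∑' i, ∫⁻ y, ENNReal.ofReal (w i y) ∂ν = 1)
    {F : ι → Y → ℝ} (hFm : ∀ i, Measurable (F i))
    (hF : ∑' i, ∫⁻ y, ENNReal.ofReal (w i y) * ‖F i y‖ₑ ∂ν ≠ ∞) (c : ℝ) :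
    ‖c - ∑' i, ∫ y, F i y * w i y ∂ν‖ₑ ≤
      ∑' i, ∫⁻ y, ENNReal.ofReal (w i y) * ‖c - F i y‖ₑ ∂ν := by
  have henorm_w : ∀ i y, ‖w i y‖ₑ = ENNReal.ofReal (w i y) := fun i y =>
    Real.enorm_of_nonneg (hw0 i y)
  have hw_le : ∀ i, ∫⁻ y, ENNReal.ofReal (w i y) ∂ν ≤ 1 := fun i => hw1 ▸ ENNReal.le_tsum i
  have hw_int : ∀ i, Integrable (w i) ν := fun i =>
    ⟨(hwm i).aestronglyMeasurable, by
      simp only [HasFiniteIntegral, henorm_w]; exact (hw_le i).trans_lt ENNReal.one_lt_top⟩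
  have hFw_int : ∀ i, Integrable (fun y => F i y * w i y) ν := fun i =>
    ⟨((hFm i).mul (hwm i)).aestronglyMeasurable, by
      simp only [HasFiniteIntegral, enorm_mul, henorm_w, mul_comm ‖F i _‖ₑ]
      exact (ENNReal.le_tsum i).trans_lt hF.lt_top⟩
  have hw_sum : HasSum (fun i => ∫ y, w i y ∂ν) 1 := by
    have hint : ∀ i, ∫ y, w i y ∂ν = (∫⁻ y, ENNReal.ofReal (w i y) ∂ν).toReal := fun i =>
      integral_eq_lintegral_of_nonneg_ae (ae_of_all _ (hw0 i)) (hwm i).aestronglyMeasurable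
    simp only [hint]
    convert (ENNReal.summable_toReal (hw1 ▸ ENNReal.one_ne_top)).hasSum
    rw [← ENNReal.tsum_toReal_eq fun i => ne_top_of_le_ne_top ENNReal.one_ne_top (hw_le i), hw1,
      ENNReal.toReal_one]
  have hFw_sum : Summable fun i => ∫ y, F i y * w i y ∂ν := by
    refine Summable.of_norm_bounded (ENNReal.summable_toReal hF) fun i => ?_
    refine (norm_integral_le_lintegral_norm _).trans (ENNReal.toReal_mono
      (ne_top_of_le_ne_top hF (ENNReal.le_tsum i)) (le_of_eq ?_))
    simp only [ofReal_norm, enorm_mul, henorm_w, mul_comm ‖F i _‖ₑ]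
  have hsplit : c - ∑' i, ∫ y, F i y * w i y ∂ν = ∑' i, ∫ y, (c - F i y) * w i y ∂ν := by
    conv_lhs => rw [← mul_one c, ← hw_sum.tsum_eq, ← tsum_mul_left,
      ← (hw_sum.summable.mul_left c).tsum_sub hFw_sum]
    refine tsum_congr fun i => ?_
    rw [← integral_const_mul, ← integral_sub ((hw_int i).const_mul c) (hFw_int i)]
    simp only [sub_mul]
  rw [hsplit]
  refine enorm_tsum_le_tsum_enorm.trans (ENNReal.tsum_le_tsum fun i => ?_)
  refine (enorm_integral_le_lintegral_enorm _).trans (le_of_eq ?_)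
  simp only [enorm_mul, henorm_w, mul_comm ‖c - F i _‖ₑ]

def HasBoundedTranslates (θ : Measure ℝ) (C : ℝ) (c' : ℝ≥0∞) : Prop :=
  ∀ s : ℝ, |s| ≤ C → ∀ φ : ℝ → ℝ≥0∞, Measurable φ → ∫⁻ t, φ (t + s) ∂θ ≤ c' * ∫⁻ t, φ t ∂θ

lemma hasBoundedTranslates_of_rnDeriv_le {θ : Measure ℝ} [IsFiniteMeasure θ]
    (hθ : θ ≪ volume ∧ volume ≪ θ) {C C' : ℝ}
    (hθshift : ∀ t₀ : ℝ, |t₀| ≤ C →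
      ∀ᵐ r ∂θ, (θ.map (fun s => s - t₀)).rnDeriv θ r ≤ ENNReal.ofReal C') :
    HasBoundedTranslates θ C (ENNReal.ofReal C') := by
  intro s hs φ hφ
  have hmap : θ.map (fun t => t - -s) = θ.map (· + s) := by simp only [sub_neg_eq_add]
  have hac : θ.map (· + s) ≪ θ := by
    have h := hθ.1.map (measurable_add_const s)
    rw [map_add_right_eq_self volume s] at h
    exact h.trans hθ.2
  rw [← lintegral_map hφ (measurable_add_const s), ← Measure.withDensity_rnDeriv_eq _ _ hac,
    lintegral_withDensity_eq_lintegral_mul _ (Measure.measurable_rnDeriv _ _) hφ,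
    ← lintegral_const_mul _ hφ]
  refine lintegral_mono_ae ?_
  filter_upwards [hmap ▸ hθshift (-s) (by rwa [abs_neg])] with t ht
  exact mul_le_mul_left ht _

noncomputable def kernelMeasure {B : Type*} [MeasurableSpace B] (ν : Measure B) (θ : Measure ℝ)
    (k : B → B → ℝ) : Measure ((B × ℝ) × B) :=
  ((ν.prod θ).prod ν).withDensity fun q => ENNReal.ofReal (k q.1.1 q.2)

section KernelMeasure

variable {B : Type*} [MeasurableSpace B] {ν : Measure B} {θ : Measure ℝ} {k : B → B → ℝ}

lemma measurable_kernelMeasure_density (hk : Measurable (Function.uncurry k)) :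
    Measurable fun q : (B × ℝ) × B => ENNReal.ofReal (k q.1.1 q.2) :=
  (hk.comp (measurable_fst.fst.prodMk measurable_snd)).ennreal_ofReal

lemma ae_kernelMeasure_pos (hk : Measurable (Function.uncurry k)) :
    ∀ᵐ q ∂kernelMeasure ν θ k, 0 < k q.1.1 q.2 := by
  rw [kernelMeasure, ae_withDensity_iff (measurable_kernelMeasure_density hk)]
  exact ae_of_all _ fun q hq => ENNReal.ofReal_pos.1 (pos_iff_ne_zero.2 hq)

variable [SFinite ν]

lemma lintegral_kernelMeasure (hk : Measurable (Function.uncurry k)) {F : (B × ℝ) × B → ℝ≥0∞}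
    (hF : Measurable F) :
    ∫⁻ q, F q ∂kernelMeasure ν θ k =
      ∫⁻ p, ∫⁻ b', ENNReal.ofReal (k p.1 b') * F (p, b') ∂ν ∂ν.prod θ := by
  have hρ := measurable_kernelMeasure_density hk
  rw [kernelMeasure, lintegral_withDensity_eq_lintegral_mul _ hρ hF,
    lintegral_prod _ (hρ.mul hF).aemeasurable]
  rfl

lemma ae_ae_of_ae_kernelMeasure (hk : Measurable (Function.uncurry k))
    {P : (B × ℝ) × B → Prop} (h : ∀ᵐ q ∂kernelMeasure ν θ k, P q) :
    ∀ᵐ p ∂ν.prod θ, ∀ᵐ b' ∂ν, 0 < k p.1 b' → P (p, b') := by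
  rw [kernelMeasure, ae_withDensity_iff (measurable_kernelMeasure_density hk)] at h
  filter_upwards [Measure.ae_ae_of_ae_prod h] with p hp
  filter_upwards [hp] with b' hb' hpos
  exact hb' (ENNReal.ofReal_pos.2 hpos).ne'

lemma lintegral_kernelMeasure_shift_le [SFinite θ] {C : ℝ} {c' : ℝ≥0∞}
    (hθ : HasBoundedTranslates θ C c')
    (hk : Measurable (Function.uncurry k)) {w : B → B → B} (hw : Measurable (Function.uncurry w))
    {s : B → B → ℝ} (hs : Measurable (Function.uncurry s))
    (hsC : ∀ᵐ b ∂ν, ∀ᵐ b' ∂ν, 0 < k b b' → |s b b'| ≤ C)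
    {φ : B × ℝ → ℝ≥0∞} (hφ : Measurable φ) :
    ∫⁻ q, φ (w q.1.1 q.2, q.1.2 + s q.1.1 q.2) ∂kernelMeasure ν θ k ≤
      ∫⁻ b, ∫⁻ b', ENNReal.ofReal (k b b') * (c' * ∫⁻ t, φ (w b b', t) ∂θ) ∂ν ∂ν := by
  have hF : Measurable fun q : (B × ℝ) × B => φ (w q.1.1 q.2, q.1.2 + s q.1.1 q.2) :=
    hφ.comp ((hw.comp (measurable_fst.fst.prodMk measurable_snd)).prodMk
      (measurable_fst.snd.add (hs.comp (measurable_fst.fst.prodMk measurable_snd))))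
  have hG := (measurable_kernelMeasure_density hk).mul hF
  rw [lintegral_kernelMeasure hk hF, lintegral_prod]
  swap
  · exact hG.lintegral_prod_right'.aemeasurable
  refine lintegral_mono_ae ?_
  filter_upwards [hsC] with b hb
  rw [lintegral_lintegral_swap]
  swap
  · exact (hG.comp ((measurable_const.prodMk measurable_fst).prodMk measurable_snd)).aemeasurable
  refine lintegral_mono_ae ?_
  filter_upwards [hb] with b' hb'
  have hφt : Measurable fun t => φ (w b b', t + s b b') := hφ.comp (by fun_prop)
  rw [lintegral_const_mul _ hφt]
  rcases le_or_gt (k b b') 0 with hk0 | hk0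
  · simp [ENNReal.ofReal_eq_zero.2 hk0]
  · gcongr
    exact hθ _ (hb' hk0) (fun t => φ (w b b', t)) (hφ.comp (by fun_prop))

end KernelMeasure

lemma sum_map_kernelMeasure_shift_le {ι B : Type*} [MeasurableSpace B]
    {ν : Measure B} {θ : Measure ℝ} [SFinite ν] [SFinite θ] {C : ℝ} {c c' : ℝ≥0∞}
    (hθ : HasBoundedTranslates θ C c')
    {k : ι → B → B → ℝ} (hk : ∀ i, Measurable (Function.uncurry (k i)))
    {w : ι → B → B → B} (hw : ∀ i, Measurable (Function.uncurry (w i)))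
    {s : ι → B → B → ℝ} (hs : ∀ i, Measurable (Function.uncurry (s i)))
    (hsC : ∀ i, ∀ᵐ b ∂ν, ∀ᵐ b' ∂ν, 0 < k i b b' → |s i b b'| ≤ C)
    (hwc : ∀ Φ : B → ℝ≥0∞, Measurable Φ →
      ∑' i, ∫⁻ b, ∫⁻ b', ENNReal.ofReal (k i b b') * Φ (w i b b') ∂ν ∂ν ≤ c * ∫⁻ b, Φ b ∂ν) :
    Measure.sum (fun i => (kernelMeasure ν θ (k i)).map
      fun q => (w i q.1.1 q.2, q.1.2 + s i q.1.1 q.2)) ≤ (c * c') • ν.prod θ := by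
  refine sum_map_le_of_tsum_lintegral_le (fun i => ?_) fun φ hφ => ?_
  · exact ((hw i).comp (measurable_fst.fst.prodMk measurable_snd)).prodMk
      (measurable_fst.snd.add ((hs i).comp (measurable_fst.fst.prodMk measurable_snd)))
  have hΦ : Measurable fun b => c' * ∫⁻ t, φ (b, t) ∂θ := hφ.lintegral_prod_right'.const_mul c'
  calc ∑' i, ∫⁻ q, φ (w i q.1.1 q.2, q.1.2 + s i q.1.1 q.2) ∂kernelMeasure ν θ (k i)
      ≤ ∑' i, ∫⁻ b, ∫⁻ b', ENNReal.ofReal (k i b b') * (c' * ∫⁻ t, φ (w i b b', t) ∂θ) ∂ν ∂ν :=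
        ENNReal.tsum_le_tsum fun i =>
          lintegral_kernelMeasure_shift_le hθ (hk i) (hw i) (hs i) (hsC i) hφ
    _ ≤ c * ∫⁻ b, c' * ∫⁻ t, φ (b, t) ∂θ ∂ν := hwc _ hΦ
    _ = (c * c') * ∫⁻ p, φ p ∂ν.prod θ := by
        rw [lintegral_const_mul _ hφ.lintegral_prod_right', lintegral_prod _ hφ.aemeasurable,
          mul_assoc]

lemma tsum_lintegral_mul_le_of_ae_tsum_le {ι B : Type*} [Countable ι] [MeasurableSpace B]
    {ν : Measure B} {H : ι → B → ℝ≥0∞} (hH : ∀ i, Measurable (H i)) {c : ℝ≥0∞}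
    (hsum : ∀ᵐ x ∂ν, ∑' i, H i x ≤ c) {Φ : B → ℝ≥0∞} (hΦ : Measurable Φ) :
    ∑' i, ∫⁻ x, H i x * Φ x ∂ν ≤ c * ∫⁻ x, Φ x ∂ν := by
  rw [← lintegral_tsum (f := fun i x => H i x * Φ x) fun i => ((hH i).mul hΦ).aemeasurable,
    ← lintegral_const_mul c hΦ]
  simp_rw [ENNReal.tsum_mul_right]
  exact lintegral_mono_ae (hsum.mono fun x hx => by gcongr)

lemma IsNonsingularAction.apply_apply_inv {Γ B : Type} [Group Γ] [MeasurableSpace B]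
    {a : Γ → B → B} {ν : Measure B} (hact : IsNonsingularAction a ν) (g : Γ) (b : B) :
    a g (a g⁻¹ b) = b := by
  rw [← hact.2.2.1, mul_inv_cancel, hact.2.1]

lemma IsNonsingularAction.lintegral_comp_inv {Γ B : Type} [Group Γ] [MeasurableSpace B]
    {a : Γ → B → B} {ν : Measure B} [IsFiniteMeasure ν] (hact : IsNonsingularAction a ν) (g : Γ)
    {G : B → ℝ≥0∞} (hG : Measurable G) :
    ∫⁻ x, G (a g⁻¹ x) ∂ν = ∫⁻ x, rnD a ν g x * G x ∂ν := by
  rw [← lintegral_map hG (hact.1 g⁻¹), ← Measure.withDensity_rnDeriv_eq _ _ (hact.2.2.2 g⁻¹).1,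
    lintegral_withDensity_eq_lintegral_mul _ (Measure.measurable_rnDeriv _ _) hG]
  rfl

section KernelBounds

variable {Γ B : Type} [Countable Γ] [MeasurableSpace B] {ν : Measure B}
  {k : Γ → B → B → ℝ} {Φ : B → ℝ≥0∞}

lemma tsum_lintegral_kernel_fst_le [SFinite ν] (hk : ∀ g, Measurable (Function.uncurry (k g)))
    (h1 : ∀ b, ∑' g, ∫⁻ b', ENNReal.ofReal (k g b b') ∂ν = 1) (hΦ : Measurable Φ) :
    ∑' g, ∫⁻ b, ∫⁻ b', ENNReal.ofReal (k g b b') * Φ b ∂ν ∂ν ≤ 1 * ∫⁻ b, Φ b ∂ν := by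
  have hinner : ∀ g b, ∫⁻ b', ENNReal.ofReal (k g b b') * Φ b ∂ν =
      (∫⁻ b', ENNReal.ofReal (k g b b') ∂ν) * Φ b := fun g b =>
    lintegral_mul_const _ (hk g).of_uncurry_left.ennreal_ofReal
  simp only [hinner]
  exact tsum_lintegral_mul_le_of_ae_tsum_le (fun g => (hk g).ennreal_ofReal.lintegral_prod_right')
    (ae_of_all _ fun b => (h1 b).le) hΦ

lemma tsum_lintegral_kernel_snd_le [SFinite ν] (hk : ∀ g, Measurable (Function.uncurry (k g)))
    {c : ℝ≥0∞} (h4 : ∀ᵐ b' ∂ν, ∫⁻ b, ∑' g, ENNReal.ofReal (k g b b') ∂ν ≤ c)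
    (hΦ : Measurable Φ) :
    ∑' g, ∫⁻ b, ∫⁻ b', ENNReal.ofReal (k g b b') * Φ b' ∂ν ∂ν ≤ c * ∫⁻ b, Φ b ∂ν := by
  have hswap : ∀ g, ∫⁻ b, ∫⁻ b', ENNReal.ofReal (k g b b') * Φ b' ∂ν ∂ν =
      ∫⁻ b', (∫⁻ b, ENNReal.ofReal (k g b b') ∂ν) * Φ b' ∂ν := fun g => by
    rw [lintegral_lintegral_swap ((hk g).ennreal_ofReal.mul (hΦ.comp measurable_snd)).aemeasurable]
    exact lintegral_congr fun b' => lintegral_mul_const _ (hk g).of_uncurry_right.ennreal_ofReal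
  simp only [hswap]
  refine tsum_lintegral_mul_le_of_ae_tsum_le
    (fun g => (hk g).ennreal_ofReal.lintegral_prod_left') ?_ hΦ
  filter_upwards [h4] with b' hb'
  refine le_of_eq_of_le ?_ hb'
  exact (lintegral_tsum fun g => (hk g).of_uncurry_right.ennreal_ofReal.aemeasurable).symm

lemma tsum_lintegral_kernel_inv_snd_le [Group Γ] [IsFiniteMeasure ν] {a : Γ → B → B}
    (hact : IsNonsingularAction a ν) (hk : ∀ g, Measurable (Function.uncurry (k g)))
    {c : ℝ≥0∞}
    (h4 : ∀ᵐ b' ∂ν, ∫⁻ b, ∑' g, ENNReal.ofReal (k g b (a g b')) * rnD a ν g b' ∂ν ≤ c)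
    (hΦ : Measurable Φ) :
    ∑' g, ∫⁻ b, ∫⁻ b', ENNReal.ofReal (k g b b') * Φ (a g⁻¹ b') ∂ν ∂ν ≤ c * ∫⁻ b, Φ b ∂ν := by
  have hK : ∀ g, Measurable fun b' => ∫⁻ b, ENNReal.ofReal (k g b b') ∂ν := fun g =>
    (hk g).ennreal_ofReal.lintegral_prod_left'
  have hrewrite : ∀ g, ∫⁻ b, ∫⁻ b', ENNReal.ofReal (k g b b') * Φ (a g⁻¹ b') ∂ν ∂ν =
      ∫⁻ x, ((∫⁻ b, ENNReal.ofReal (k g b (a g x)) ∂ν) * rnD a ν g x) * Φ x ∂ν := fun g => by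
    rw [lintegral_lintegral_swap (((hk g).ennreal_ofReal).mul
      (hΦ.comp ((hact.1 g⁻¹).comp measurable_snd))).aemeasurable]
    calc ∫⁻ b', ∫⁻ b, ENNReal.ofReal (k g b b') * Φ (a g⁻¹ b') ∂ν ∂ν
        = ∫⁻ b', (fun x => (∫⁻ b, ENNReal.ofReal (k g b (a g x)) ∂ν) * Φ x) (a g⁻¹ b') ∂ν :=
          lintegral_congr fun b' => by
            dsimp only
            rw [hact.apply_apply_inv, lintegral_mul_const _ (hk g).of_uncurry_right.ennreal_ofReal]
      _ = ∫⁻ x, rnD a ν g x * ((∫⁻ b, ENNReal.ofReal (k g b (a g x)) ∂ν) * Φ x) ∂ν :=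
          hact.lintegral_comp_inv g (G := fun x => (∫⁻ b, ENNReal.ofReal (k g b (a g x)) ∂ν) * Φ x)
            (((hK g).comp (hact.1 g)).mul hΦ)
      _ = _ := lintegral_congr fun x => by ring
  simp only [hrewrite]
  refine tsum_lintegral_mul_le_of_ae_tsum_le
    (fun g => ((hK g).comp (hact.1 g)).mul (Measure.measurable_rnDeriv _ _)) ?_ hΦ
  filter_upwards [h4] with x hx
  refine le_of_eq_of_le ?_ hx
  rw [lintegral_tsum fun g => ((hk g).of_uncurry_right.ennreal_ofReal.mul_const _).aemeasurable]
  exact tsum_congr fun g => (lintegral_mul_const _ (hk g).of_uncurry_right.ennreal_ofReal).symm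

lemma tsum_lintegral_kernel_inv_fst_le [Group Γ] [IsFiniteMeasure ν] {a : Γ → B → B}
    (hact : IsNonsingularAction a ν) (hk : ∀ g, Measurable (Function.uncurry (k g)))
    {c : ℝ≥0∞}
    (h4 : ∀ᵐ b ∂ν, ∫⁻ b', ∑' g, ENNReal.ofReal (k g (a g b) b') * rnD a ν g b ∂ν ≤ c)
    (hΦ : Measurable Φ) :
    ∑' g, ∫⁻ b, ∫⁻ b', ENNReal.ofReal (k g b b') * Φ (a g⁻¹ b) ∂ν ∂ν ≤ c * ∫⁻ b, Φ b ∂ν := by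
  have hK : ∀ g, Measurable fun b => ∫⁻ b', ENNReal.ofReal (k g b b') ∂ν := fun g =>
    (hk g).ennreal_ofReal.lintegral_prod_right'
  have hrewrite : ∀ g, ∫⁻ b, ∫⁻ b', ENNReal.ofReal (k g b b') * Φ (a g⁻¹ b) ∂ν ∂ν =
      ∫⁻ x, ((∫⁻ b', ENNReal.ofReal (k g (a g x) b') ∂ν) * rnD a ν g x) * Φ x ∂ν := fun g => by
    calc ∫⁻ b, ∫⁻ b', ENNReal.ofReal (k g b b') * Φ (a g⁻¹ b) ∂ν ∂ν
        = ∫⁻ b, (fun x => (∫⁻ b', ENNReal.ofReal (k g (a g x) b') ∂ν) * Φ x) (a g⁻¹ b) ∂ν :=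
          lintegral_congr fun b => by
            dsimp only
            rw [hact.apply_apply_inv, lintegral_mul_const _ (hk g).of_uncurry_left.ennreal_ofReal]
      _ = ∫⁻ x, rnD a ν g x * ((∫⁻ b', ENNReal.ofReal (k g (a g x) b') ∂ν) * Φ x) ∂ν :=
          hact.lintegral_comp_inv g
            (G := fun x => (∫⁻ b', ENNReal.ofReal (k g (a g x) b') ∂ν) * Φ x)
            (((hK g).comp (hact.1 g)).mul hΦ)
      _ = _ := lintegral_congr fun x => by ring
  simp only [hrewrite]
  refine tsum_lintegral_mul_le_of_ae_tsum_le
    (fun g => ((hK g).comp (hact.1 g)).mul (Measure.measurable_rnDeriv _ _)) ?_ hΦ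
  filter_upwards [h4] with x hx
  refine le_of_eq_of_le ?_ hx
  rw [lintegral_tsum fun g => ((hk g).of_uncurry_left.ennreal_ofReal.mul_const _).aemeasurable]
  exact tsum_congr fun g => (lintegral_mul_const _ (hk g).of_uncurry_left.ennreal_ofReal).symm

end KernelBounds

section Zop

variable {Γ B : Type} [Group Γ] [MeasurableSpace B] {ν : Measure B}
  {θ : Measure ℝ} {a : Γ → B → B} {R : Γ → B → ℝ}
  {Υ : ℕ → Γ → B → B → ℝ} {n : ℕ} {c : ℝ≥0∞}

lemma measurable_cocycleShift (hR : ∀ g, Measurable (R g)) (g : Γ) :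
    Measurable fun q : (B × ℝ) × B => (q.1.1, q.1.2 + R g⁻¹ q.2 - R g⁻¹ q.1.1) :=
  measurable_fst.fst.prodMk ((measurable_fst.snd.add ((hR _).comp measurable_snd)).sub
    ((hR _).comp measurable_fst.fst))

lemma Zop_ae_eq_of_ae_eq [Countable Γ] [SFinite ν] (hR : ∀ g, Measurable (R g))
    (hΥ0 : ∀ g b b', 0 ≤ Υ n g b b')
    (hΥm : ∀ g, Measurable (Function.uncurry (Υ n g)))
    (hz : Measure.sum (fun g => (kernelMeasure ν θ (Υ n g)).map
      fun q => (q.1.1, q.1.2 + R g⁻¹ q.2 - R g⁻¹ q.1.1)) ≤ c • ν.prod θ)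
    {f f₀ : B × ℝ → ℝ} (hf : f =ᵐ[ν.prod θ] f₀) :
    Zop a ν R Υ n f =ᵐ[ν.prod θ] Zop a ν R Υ n f₀ := by
  have h := fun g => ae_ae_of_ae_kernelMeasure (hΥm g)
    (ae_comp_of_sum_map_le (measurable_cocycleShift hR) hz hf g)
  filter_upwards [ae_all_iff.2 h] with p hp
  refine tsum_congr fun g => integral_congr_ae ?_
  filter_upwards [hp g] with b' hb'
  rcases (hΥ0 g p.1 b').eq_or_lt with h0 | hpos
  · simp [← h0]
  · rw [hb' hpos]

lemma eLpNorm_sub_Zop_le [Countable Γ] [SFinite ν] (hR : ∀ g, Measurable (R g))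
    (hΥ0 : ∀ g b b', 0 ≤ Υ n g b b')
    (hΥm : ∀ g, Measurable (Function.uncurry (Υ n g)))
    (hΥ1 : ∀ b, ∑' g, ∫⁻ b', ENNReal.ofReal (Υ n g b b') ∂ν = 1) (hc : c ≠ ∞)
    (hz : Measure.sum (fun g => (kernelMeasure ν θ (Υ n g)).map
      fun q => (q.1.1, q.1.2 + R g⁻¹ q.2 - R g⁻¹ q.1.1)) ≤ c • ν.prod θ)
    {f : B × ℝ → ℝ} (hfm : Measurable f) (hf : Integrable f (ν.prod θ)) :
    eLpNorm (fun p => f p - Zop a ν R Υ n f p) 1 (ν.prod θ) ≤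
      ∑' g, ∫⁻ q, ‖f q.1 - f (q.1.1, q.1.2 + R g⁻¹ q.2 - R g⁻¹ q.1.1)‖ₑ
        ∂kernelMeasure ν θ (Υ n g) := by
  have hzm := measurable_cocycleShift hR
  have hρ : ∀ g, Measurable fun q : (B × ℝ) × B => ENNReal.ofReal (Υ n g q.1.1 q.2) :=
    fun g => measurable_kernelMeasure_density (hΥm g)
  have hF : ∀ g, Measurable fun q : (B × ℝ) × B =>
      ENNReal.ofReal (Υ n g q.1.1 q.2) * ‖f (q.1.1, q.1.2 + R g⁻¹ q.2 - R g⁻¹ q.1.1)‖ₑ :=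
    fun g => (hρ g).mul (hfm.comp (hzm g)).enorm
  have hG : ∀ g, Measurable fun q : (B × ℝ) × B =>
      ENNReal.ofReal (Υ n g q.1.1 q.2) * ‖f q.1 - f (q.1.1, q.1.2 + R g⁻¹ q.2 - R g⁻¹ q.1.1)‖ₑ :=
    fun g => (hρ g).mul (hfm.comp measurable_fst |>.sub (hfm.comp (hzm g))).enorm
  have hfin : ∀ᵐ p ∂ν.prod θ, ∑' g, ∫⁻ b', ENNReal.ofReal (Υ n g p.1 b') *
      ‖f (p.1, p.2 + R g⁻¹ b' - R g⁻¹ p.1)‖ₑ ∂ν ≠ ∞ := by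
    refine ae_lt_top (Measurable.tsum fun g => (hF g).lintegral_prod_right') ?_
      |>.mono fun p => ne_of_lt
    rw [lintegral_tsum fun g => (hF g).lintegral_prod_right'.aemeasurable]
    refine ne_top_of_le_ne_top (ENNReal.mul_ne_top hc hf.2.ne) (le_of_eq_of_le
      (tsum_congr fun g => ?_) (tsum_lintegral_comp_le_of_sum_map_le hzm hz hfm.enorm))
    exact (lintegral_kernelMeasure (hΥm g) (hfm.comp (hzm g)).enorm).symm
  rw [eLpNorm_one_eq_lintegral_enorm]
  calc ∫⁻ p, ‖f p - Zop a ν R Υ n f p‖ₑ ∂ν.prod θ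
      ≤ ∫⁻ p, ∑' g, ∫⁻ b', ENNReal.ofReal (Υ n g p.1 b') *
          ‖f p - f (p.1, p.2 + R g⁻¹ b' - R g⁻¹ p.1)‖ₑ ∂ν ∂ν.prod θ :=
        lintegral_mono_ae <| hfin.mono fun p hp =>
          enorm_sub_tsum_integral_mul_le (fun g => hΥ0 g p.1) (fun g => (hΥm g).of_uncurry_left)
            (hΥ1 p.1) (fun g => (hfm.comp (hzm g)).comp measurable_prodMk_left) hp (f p)
    _ = _ := by
        rw [lintegral_tsum fun g => (hG g).lintegral_prod_right'.aemeasurable]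
        exact tsum_congr fun g =>
          (lintegral_kernelMeasure (hΥm g)
            ((hfm.comp measurable_fst).sub (hfm.comp (hzm g))).enorm).symm

end Zop

lemma map_prod_skew_absolutelyContinuous {B : Type*} [MeasurableSpace B] {ν : Measure B}
    [SFinite ν] {θ : Measure ℝ} [SFinite θ] (hθ : θ ≪ volume ∧ volume ≪ θ) {w : B → B}
    (hw : Measurable w) (hwν : ν.map w ≪ ν) {c : B → ℝ} (hc : Measurable c) :
    (ν.prod θ).map (fun p => (w p.1, p.2 + c p.1)) ≪ ν.prod θ := by
  have hshear : MeasurePreserving (fun p : B × ℝ => (p.1, p.2 + c p.1))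
      (ν.prod volume) (ν.prod volume) :=
    (MeasurePreserving.id ν).skew_product (g := fun b t => t + c b) (by fun_prop)
      (ae_of_all _ fun b => map_add_right_eq_self volume (c b))
  have hT : (fun p : B × ℝ => (w p.1, p.2 + c p.1)) =
      Prod.map w id ∘ fun p : B × ℝ => (p.1, p.2 + c p.1) := rfl
  refine (((Measure.AbsolutelyContinuous.refl ν).prod hθ.1).map (by fun_prop)).trans ?_
  rw [hT, ← Measure.map_map (hw.prodMap measurable_id) hshear.measurable, hshear.map_eq,
    ← Measure.map_prod_map _ _ hw measurable_id, Measure.map_id]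
  exact hwν.prod hθ.2

lemma IsNonsingularAction.ae_invariant_of_ae_eq {Γ B : Type} [Group Γ] [MeasurableSpace B]
    {a : Γ → B → B} {ν : Measure B} [SFinite ν] (hact : IsNonsingularAction a ν)
    {θ : Measure ℝ} [SFinite θ] (hθ : θ ≪ volume ∧ volume ≪ θ)
    {R : Γ → B → ℝ} (hR : ∀ g, Measurable (R g)) {f f₀ : B × ℝ → ℝ} (hf : f =ᵐ[ν.prod θ] f₀)
    (hinv : ∀ g, ∀ᵐ p ∂ν.prod θ, f (a g p.1, p.2 + R g p.1) = f p) (g : Γ) :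
    ∀ᵐ p ∂ν.prod θ, f₀ (a g p.1, p.2 + R g p.1) = f₀ p := by
  have hskew := map_prod_skew_absolutelyContinuous hθ (hact.1 g) (hact.2.2.2 g).1 (hR g)
  have hm : Measurable fun p : B × ℝ => (a g p.1, p.2 + R g p.1) :=
    ((hact.1 g).comp measurable_fst).prodMk (measurable_snd.add ((hR g).comp measurable_fst))
  filter_upwards [hinv g, hf, ae_of_ae_map hm.aemeasurable (hskew.ae_le hf)] with p h₁ h₂ h₃
  rw [← h₃, h₁, h₂]

section AdmissibleKernel

variable {Γ B : Type} [Countable Γ] [MeasurableSpace B] {ν : Measure B}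
  [IsFiniteMeasure ν] {θ : Measure ℝ} [SFinite θ] {C : ℝ} {c' : ℝ≥0∞} {k : Γ → B → B → ℝ}

lemma sum_map_kernelMeasure_fst_le
    (hθ : HasBoundedTranslates θ C c') (hC : 0 ≤ C)
    (hk : ∀ g, Measurable (Function.uncurry (k g)))
    (h1 : ∀ b, ∑' g, ∫⁻ b', ENNReal.ofReal (k g b b') ∂ν = 1) :
    Measure.sum (fun g => (kernelMeasure ν θ (k g)).map fun q => q.1) ≤ c' • ν.prod θ := by
  simpa only [add_zero, one_mul] using sum_map_kernelMeasure_shift_le hθ hk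
    (w := fun _ b _ => b) (fun _ => measurable_fst) (s := fun _ _ _ => 0)
    (fun _ => measurable_const) (fun _ => ae_of_all _ fun _ => ae_of_all _ fun _ _ => by simpa)
    fun Φ hΦ => tsum_lintegral_kernel_fst_le hk h1 hΦ

lemma sum_map_kernelMeasure_swap_le
    (hθ : HasBoundedTranslates θ C c') (hC : 0 ≤ C)
    (hk : ∀ g, Measurable (Function.uncurry (k g))) {c : ℝ≥0∞}
    (h4 : ∀ᵐ b' ∂ν, ∫⁻ b, ∑' g, ENNReal.ofReal (k g b b') ∂ν ≤ c) :
    Measure.sum (fun g => (kernelMeasure ν θ (k g)).map fun q => (q.2, q.1.2)) ≤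
      (c * c') • ν.prod θ := by
  simpa only [add_zero] using sum_map_kernelMeasure_shift_le hθ hk
    (w := fun _ _ b' => b') (fun _ => measurable_snd) (s := fun _ _ _ => 0)
    (fun _ => measurable_const) (fun _ => ae_of_all _ fun _ => ae_of_all _ fun _ _ => by simpa)
    fun Φ hΦ => tsum_lintegral_kernel_snd_le hk h4 hΦ

lemma sum_map_kernelMeasure_cocycleShift_le [Group Γ]
    (hθ : HasBoundedTranslates θ C c')
    {R : Γ → B → ℝ} (hR : ∀ g, Measurable (R g))
    (hk : ∀ g, Measurable (Function.uncurry (k g)))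
    (h1 : ∀ b, ∑' g, ∫⁻ b', ENNReal.ofReal (k g b b') ∂ν = 1)
    (h3 : ∀ g, ∀ᵐ b ∂ν, ∀ᵐ b' ∂ν, 0 < k g b b' → |R g⁻¹ b| + |R g⁻¹ b'| ≤ C) :
    Measure.sum (fun g => (kernelMeasure ν θ (k g)).map
      fun q => (q.1.1, q.1.2 + R g⁻¹ q.2 - R g⁻¹ q.1.1)) ≤ c' • ν.prod θ := by
  simpa only [← add_sub_assoc, one_mul] using sum_map_kernelMeasure_shift_le hθ hk
    (w := fun _ b _ => b) (fun _ => measurable_fst) (s := fun g b b' => R g⁻¹ b' - R g⁻¹ b)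
    (fun g => ((hR _).comp measurable_snd).sub ((hR _).comp measurable_fst))
    (fun g => (h3 g).mono fun b hb => hb.mono fun b' hb' hpos =>
      (abs_sub _ _).trans (by linarith [hb' hpos]))
    fun Φ hΦ => tsum_lintegral_kernel_fst_le hk h1 hΦ

end AdmissibleKernel

section Approximation

variable {Γ B : Type} [Countable Γ] [MetricSpace B] [CompactSpace B] [MeasurableSpace B]
  [BorelSpace B] {ν : Measure B} [IsFiniteMeasure ν] {θ : Measure ℝ}
  [IsFiniteMeasure θ] {C : ℝ} {c' : ℝ≥0∞} {Υ : ℕ → Γ → B → B → ℝ}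
  {β : ℕ → ℝ} {f : B × ℝ → ℝ}

lemma tendsto_tsum_lintegral_kernelMeasure_horizontal
    (hθ : HasBoundedTranslates θ C c') (hC : 0 ≤ C) (hc' : c' ≠ ∞)
    (hΥm : ∀ n g, Measurable (Function.uncurry (Υ n g)))
    (hΥ1 : ∀ n b, ∑' g, ∫⁻ b', ENNReal.ofReal (Υ n g b b') ∂ν = 1) {C₄ : ℝ}
    (h4 : ∀ n, ∀ᵐ b' ∂ν, ∫⁻ b, ∑' g, ENNReal.ofReal (Υ n g b b') ∂ν ≤ ENNReal.ofReal C₄)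
    (hβ : Tendsto β atTop (𝓝 0)) (hsupp : ∀ n g b b', 0 < Υ n g b b' → dist b b' ≤ β n)
    (hfm : Measurable f) (hf : Integrable f (ν.prod θ)) :
    Tendsto (fun n => ∑' g, ∫⁻ q, ‖f q.1 - f (q.2, q.1.2)‖ₑ ∂kernelMeasure ν θ (Υ n g))
      atTop (𝓝 0) := by
  refine tendsto_tsum_lintegral_enorm_sub_comp_of_dist_le
    (κ := fun n g => kernelMeasure ν θ (Υ n g))
    (x := fun _ _ q => q.1) (y := fun _ _ q => (q.2, q.1.2))
    (fun _ _ => measurable_fst) (fun _ _ => measurable_snd.prodMk measurable_fst.snd) hc'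
    ?_ (fun n => sum_map_kernelMeasure_fst_le hθ hC (hΥm n) (hΥ1 n))
    (fun n => sum_map_kernelMeasure_swap_le hθ hC (hΥm n) (h4 n)) hβ
    (fun n g => (ae_kernelMeasure_pos (hΥm n g)).mono fun q hq => ?_) hfm hf
  · exact ENNReal.mul_ne_top ENNReal.ofReal_ne_top hc'
  · simpa [Prod.dist_eq] using hsupp n g _ _ hq

lemma tendsto_tsum_lintegral_kernelMeasure_vertical [Group Γ] {a : Γ → B → B}
    (hact : IsNonsingularAction a ν) {R : Γ → B → ℝ} (hR : ∀ g, Measurable (R g))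
    (hθ : HasBoundedTranslates θ C c') (hc' : c' ≠ ∞)
    (hΥm : ∀ n g, Measurable (Function.uncurry (Υ n g)))
    (h3 : ∀ n g, ∀ᵐ b ∂ν, ∀ᵐ b' ∂ν, 0 < Υ n g b b' → |R g⁻¹ b| + |R g⁻¹ b'| ≤ C) {C₄ : ℝ}
    (h4b : ∀ n, ∀ᵐ b' ∂ν,
      ∫⁻ b, ∑' g, ENNReal.ofReal (Υ n g b (a g b')) * rnD a ν g b' ∂ν ≤ ENNReal.ofReal C₄)
    (h4c : ∀ n, ∀ᵐ b ∂ν,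
      ∫⁻ b', ∑' g, ENNReal.ofReal (Υ n g (a g b) b') * rnD a ν g b ∂ν ≤ ENNReal.ofReal C₄)
    (hβ : Tendsto β atTop (𝓝 0))
    (hsupp : ∀ n g b b', 0 < Υ n g b b' → dist (a g⁻¹ b) (a g⁻¹ b') ≤ β n)
    (hfm : Measurable f) (hf : Integrable f (ν.prod θ)) :
    Tendsto (fun n => ∑' g, ∫⁻ q, ‖f (a g⁻¹ q.2, q.1.2 + R g⁻¹ q.2) -
      f (a g⁻¹ q.1.1, q.1.2 + R g⁻¹ q.2)‖ₑ ∂kernelMeasure ν θ (Υ n g)) atTop (𝓝 0) := by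
  have hs : ∀ n g, ∀ᵐ b ∂ν, ∀ᵐ b' ∂ν, 0 < Υ n g b b' → |R g⁻¹ b'| ≤ C := fun n g =>
    (h3 n g).mono fun b hb => hb.mono fun b' hb' hpos =>
      (le_add_of_nonneg_left (abs_nonneg _)).trans (hb' hpos)
  have hsm : ∀ g, Measurable (Function.uncurry fun (_ : B) b' => R g⁻¹ b') := fun g =>
    (hR _).comp measurable_snd
  have hy₀ : ∀ n, Measure.sum (fun g => (kernelMeasure ν θ (Υ n g)).map
      fun q => (a g⁻¹ q.2, q.1.2 + R g⁻¹ q.2)) ≤ (ENNReal.ofReal C₄ * c') • ν.prod θ := fun n =>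
    sum_map_kernelMeasure_shift_le hθ (hΥm n) (w := fun g _ b' => a g⁻¹ b')
      (fun g => (hact.1 g⁻¹).comp measurable_snd) (s := fun g _ b' => R g⁻¹ b') hsm (hs n)
      fun Φ hΦ => tsum_lintegral_kernel_inv_snd_le hact (hΥm n) (h4b n) hΦ
  have hy₁ : ∀ n, Measure.sum (fun g => (kernelMeasure ν θ (Υ n g)).map
      fun q => (a g⁻¹ q.1.1, q.1.2 + R g⁻¹ q.2)) ≤ (ENNReal.ofReal C₄ * c') • ν.prod θ := fun n =>
    sum_map_kernelMeasure_shift_le hθ (hΥm n) (w := fun g b _ => a g⁻¹ b)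
      (fun g => (hact.1 g⁻¹).comp measurable_fst) (s := fun g _ b' => R g⁻¹ b') hsm (hs n)
      fun Φ hΦ => tsum_lintegral_kernel_inv_fst_le hact (hΥm n) (h4c n) hΦ
  refine tendsto_tsum_lintegral_enorm_sub_comp_of_dist_le
    (κ := fun n g => kernelMeasure ν θ (Υ n g))
    (x := fun _ g q => (a g⁻¹ q.2, q.1.2 + R g⁻¹ q.2))
    (y := fun _ g q => (a g⁻¹ q.1.1, q.1.2 + R g⁻¹ q.2)) (fun _ g => ?_) (fun _ g => ?_)
    (ENNReal.mul_ne_top ENNReal.ofReal_ne_top hc') (ENNReal.mul_ne_top ENNReal.ofReal_ne_top hc')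
    hy₀ hy₁ hβ (fun n g => (ae_kernelMeasure_pos (hΥm n g)).mono fun q hq => ?_) hfm hf
  · exact ((hact.1 _).comp measurable_snd).prodMk
      (measurable_fst.snd.add ((hR _).comp measurable_snd))
  · exact ((hact.1 _).comp measurable_fst.fst).prodMk
      (measurable_fst.snd.add ((hR _).comp measurable_snd))
  · simpa [Prod.dist_eq, dist_comm] using hsupp n g _ _ hq

end Approximation

lemma tsum_lintegral_kernelMeasure_cocycleShift_le_of_invariant {Γ B : Type} [Group Γ]
    [MeasurableSpace B] {ν : Measure B} {θ : Measure ℝ} {a : Γ → B → B}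
    {R : Γ → B → ℝ} (hR : ∀ g, Measurable (R g)) {k : Γ → B → B → ℝ} {c₁ c₂ : ℝ≥0∞}
    (hx : Measure.sum (fun g => (kernelMeasure ν θ (k g)).map fun q => (q.2, q.1.2)) ≤
      c₁ • ν.prod θ)
    (hz : Measure.sum (fun g => (kernelMeasure ν θ (k g)).map
      fun q => (q.1.1, q.1.2 + R g⁻¹ q.2 - R g⁻¹ q.1.1)) ≤ c₂ • ν.prod θ)
    {f : B × ℝ → ℝ} (hfm : Measurable f)
    (hinv : ∀ g, ∀ᵐ p ∂ν.prod θ, f (a g⁻¹ p.1, p.2 + R g⁻¹ p.1) = f p) :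
    ∑' g, ∫⁻ q, ‖f q.1 - f (q.1.1, q.1.2 + R g⁻¹ q.2 - R g⁻¹ q.1.1)‖ₑ ∂kernelMeasure ν θ (k g) ≤
      ∑' g, ∫⁻ q, ‖f q.1 - f (q.2, q.1.2)‖ₑ ∂kernelMeasure ν θ (k g) +
        ∑' g, ∫⁻ q, ‖f (a g⁻¹ q.2, q.1.2 + R g⁻¹ q.2) - f (a g⁻¹ q.1.1, q.1.2 + R g⁻¹ q.2)‖ₑ
          ∂kernelMeasure ν θ (k g) := by
  have hxm : ∀ g : Γ, Measurable fun q : (B × ℝ) × B => (q.2, q.1.2) := fun _ =>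
    measurable_snd.prodMk measurable_fst.snd
  rw [← ENNReal.tsum_add]
  refine ENNReal.tsum_le_tsum fun g => ?_
  refine (lintegral_mono_ae ?_).trans_eq (lintegral_add_left
    (f := fun q : (B × ℝ) × B => ‖f q.1 - f (q.2, q.1.2)‖ₑ)
    ((hfm.comp measurable_fst).sub (hfm.comp (hxm g))).enorm _)
  filter_upwards [ae_comp_of_sum_map_le hxm hx (hinv g) g,
    ae_comp_of_sum_map_le (measurable_cocycleShift hR) hz (hinv g) g] with q h₁ h₂
  simp only [sub_add_cancel] at h₁ h₂
  rw [← h₁, ← h₂]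
  simp only [← edist_eq_enorm_sub]
  exact edist_triangle _ _ _

theorem stmt7_general {Γ B : Type} [Group Γ] [Countable Γ] [MetricSpace B] [CompactSpace B]
    [MeasurableSpace B] [BorelSpace B]
    (ν : Measure B) [IsProbabilityMeasure ν] (a : Γ → B → B)
    (hact : IsNonsingularAction a ν)
    (R : Γ → B → ℝ) (hRmeas : ∀ g : Γ, Measurable (R g))
    (Υ : ℕ → Γ → B → B → ℝ) (C : ℝ) (hadm : IsAdmissibleFamily a ν R Υ C)
    (θ : Measure ℝ) (hθprob : IsProbabilityMeasure θ)
    (hθeq : θ ≪ (volume : Measure ℝ) ∧ (volume : Measure ℝ) ≪ θ)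
    (C' : ℝ)
    (hθshift : ∀ t₀ : ℝ, |t₀| ≤ C →
      ∀ᵐ r ∂θ, (θ.map (fun s => s - t₀)).rnDeriv θ r ≤ ENNReal.ofReal C')
    (f : B × ℝ → ℝ) (hf : Integrable f (ν.prod θ))
    (hinv : ∀ g : Γ, ∀ᵐ p ∂(ν.prod θ), f (a g p.1, p.2 + R g p.1) = f p) :
    Tendsto (fun n => eLpNorm (fun p => f p - Zop a ν R Υ n f p) 1 (ν.prod θ))
      atTop (nhds 0) := by
  obtain ⟨hC, hΥ0, hΥm, hΥ1, ⟨β, hβ, hsupp⟩, hΥ3, C₄, -, h4a, h4b, h4c⟩ := hadm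
  have hθ := hasBoundedTranslates_of_rnDeriv_le hθeq hθshift
  obtain ⟨f₀, hf₀m, hff₀⟩ := hf.aemeasurable
  have hf₀ : Integrable f₀ (ν.prod θ) := hf.congr hff₀
  have hz := fun n => sum_map_kernelMeasure_cocycleShift_le hθ hRmeas (hΥm n) (hΥ1 n) (hΥ3 n)
  have hP := tendsto_tsum_lintegral_kernelMeasure_horizontal hθ hC.le ENNReal.ofReal_ne_top hΥm
    hΥ1 h4a hβ (fun n g b b' h => (hsupp n g b b' h).1) hf₀m hf₀
  have hQ := tendsto_tsum_lintegral_kernelMeasure_vertical hact hRmeas hθ ENNReal.ofReal_ne_top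
    hΥm hΥ3 h4b h4c hβ (fun n g b b' h => (hsupp n g b b' h).2) hf₀m hf₀
  refine tendsto_of_tendsto_of_tendsto_of_le_of_le tendsto_const_nhds
    (by simpa using hP.add hQ) (fun _ => bot_le) fun n => ?_
  refine (eLpNorm_congr_ae
    (hff₀.sub (Zop_ae_eq_of_ae_eq hRmeas (hΥ0 n) (hΥm n) (hz n) hff₀))).trans_le ?_
  exact (eLpNorm_sub_Zop_le hRmeas (hΥ0 n) (hΥm n) (hΥ1 n) ENNReal.ofReal_ne_top (hz n) hf₀m
    hf₀).trans (tsum_lintegral_kernelMeasure_cocycleShift_le_of_invariant hRmeas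
      (sum_map_kernelMeasure_swap_le hθ hC.le (hΥm n) (h4a n)) (hz n) hf₀m
      fun g => hact.ae_invariant_of_ae_eq hθeq hRmeas hff₀ hinv g⁻¹)

/-- Proposition 3.4 of the paper: if `f ∈ L¹(ν × θ)` is invariant for the
Maharam-type action `g·(b,t) = (gb, t + R(g,b))`, then `‖f − Z_n f‖₁ → 0`. -/
theorem stmt7 {Γ B : Type} [Group Γ] [Countable Γ] [MetricSpace B] [CompactSpace B]
    [MeasurableSpace B] [BorelSpace B]
    (ν : Measure B) [IsProbabilityMeasure ν] (a : Γ → B → B)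
    (hact : IsNonsingularAction a ν)
    (R : Γ → B → ℝ) (hRmeas : ∀ g : Γ, Measurable (R g))
    (hRcoc : ∀ (g₁ g₂ : Γ) (b : B), R (g₂ * g₁) b = R g₂ (a g₁ b) + R g₁ b)
    (hRrn : ∀ g : Γ, ∀ᵐ b ∂ν, ENNReal.ofReal (Real.exp (R g b)) = rnD a ν g b)
    (Υ : ℕ → Γ → B → B → ℝ) (C : ℝ) (hadm : IsAdmissibleFamily a ν R Υ C)
    (θ : Measure ℝ) (hθprob : IsProbabilityMeasure θ)
    (hθeq : θ ≪ (volume : Measure ℝ) ∧ (volume : Measure ℝ) ≪ θ)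
    (C' : ℝ) (hC' : 0 < C')
    (hθshift : ∀ t₀ : ℝ, |t₀| ≤ C →
      ∀ᵐ r ∂θ, (θ.map (fun s => s - t₀)).rnDeriv θ r ≤ ENNReal.ofReal C')
    (f : B × ℝ → ℝ) (hf : Integrable f (ν.prod θ))
    (hinv : ∀ g : Γ, ∀ᵐ p ∂(ν.prod θ), f (a g p.1, p.2 + R g p.1) = f p) :
    Tendsto (fun n => eLpNorm (fun p => f p - Zop a ν R Υ n f p) 1 (ν.prod θ))
      atTop (nhds 0) :=
  stmt7_general ν a hact R hRmeas Υ C hadm θ hθprob hθeq C' hθshift f hf hinv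
end

section
/- Let (Γ,d) be a countable group with a left-invariant metric d such that (Γ,d) is a proper, δ-hyperbolic, uniformly (1,c)-quasi-geodesic metric space, and suppose there are constants v, C₀ > 0 with C₀⁻¹·e^{v·r} ≤ |B(g,r)| ≤ C₀·e^{v·r} for all g ∈ Γ and r > 0. Then there exist constants a₀, T₀ > 0 and C₁ ≥ 1, depending only on δ, c, v, C₀, such that for every Gromov sequence {q_n} in Γ with horofunction h(z) = liminf_{n→∞}(d(z,q_n) − d(q_n,e)), for all a ≥ a₀, all reals T₁ ≤ T₂ with T₂ − T₁ ≥ T₀, and every r > 0 with r ≥ max(|T₁|,|T₂|) − 2c: C₁⁻¹·e^{v(r+T₂)/2} ≤ |{g ∈ Γ : r − a < d(e,g) ≤ r and T₁ ≤ h(g) ≤ T₂}| ≤ C₁·e^{v(r+T₂)/2}. -/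
open Filter Set Metric
open scoped Topology

/-- The Gromov product `(x|y)_z = (d(x,z) + d(y,z) − d(x,y))/2`. -/
noncomputable def gromovProd {X : Type*} [MetricSpace X] (x y z : X) : ℝ :=
  (dist x z + dist y z - dist x y) / 2

/-- `(X,d)` is δ-hyperbolic: `(x|y)_w ≥ min((x|z)_w, (y|z)_w) − δ` for all points. -/
def IsDeltaHyperbolic (X : Type*) [MetricSpace X] (δ : ℝ) : Prop :=
  ∀ x y z w : X, min (gromovProd x z w) (gromovProd y z w) - δ ≤ gromovProd x y w

/-- A Gromov sequence (with respect to the basepoint `z`): `(x_i|x_j)_z → ∞` as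
`i, j → ∞`. -/
def IsGromovSeq {X : Type*} [MetricSpace X] (z : X) (x : ℕ → X) : Prop :=
  Tendsto (fun p : ℕ × ℕ => gromovProd (x p.1) (x p.2) z) atTop atTop

/-- `γ` is a `(1,c)`-quasi-geodesic on the set `s ⊆ ℝ`. -/
def IsQuasiGeodesicOn {X : Type*} [MetricSpace X] (γ : ℝ → X) (s : Set ℝ) (c : ℝ) : Prop :=
  ∀ u ∈ s, ∀ v ∈ s, |u - v| - c ≤ dist (γ u) (γ v) ∧ dist (γ u) (γ v) ≤ |u - v| + c

/-- The horofunction of a Gromov sequence `q`, with basepoint the identity: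
`h(z) = liminf_n (d(z,q_n) − d(q_n,e))`. -/
noncomputable def horofn {Γ : Type*} [Group Γ] [MetricSpace Γ] (q : ℕ → Γ) (z : Γ) : ℝ :=
  Filter.liminf (fun n => dist z (q n) - dist (q n) (1 : Γ)) Filter.atTop

/-! The horofunction of a Gromov sequence is, on the ball of radius `R`, within `2δ` of
`g ↦ |g| - 2 (g|x)_e` for a term `x` of the sequence far enough out, so the set being counted is
essentially `{g : |g| ≈ r, (g|x)_e ≈ (r - T₂)/2}`. Let `p` be the point at distance about
`t ≈ (r - T₂)/2` from `e` on a quasi-geodesic from `e` to `x`. By hyperbolicity every such `g`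
lies within `(r + T₂)/2 + O(1)` of `p`, which gives the upper bound. Conversely, left
translation by `p` maps into the set every `u` of the annulus of radius `ρ ≈ (r + T₂)/2` whose
Gromov products with `p⁻¹` and `p⁻¹x` are at most a constant `K`. The remaining `u`, with
`(u|w)_e ≥ K`, lie in the ball of radius `ρ - K + O(1)` about a point on the way to `w`; for `K`
large these shadows hold a small fraction of the annulus, which gives the lower bound. -/

section GromovProduct

variable {X : Type*} [MetricSpace X]

lemma gromovProd_comm (x y z : X) : gromovProd x y z = gromovProd y x z := by
  simp only [gromovProd, dist_comm x y]
  ring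

lemma gromovProd_nonneg (x y z : X) : 0 ≤ gromovProd x y z := by
  unfold gromovProd
  linarith [dist_triangle x z y, dist_comm z y]

lemma gromovProd_le_dist_left (x y z : X) : gromovProd x y z ≤ dist x z := by
  unfold gromovProd
  linarith [dist_triangle y x z, dist_comm x y]

lemma gromovProd_self (x z : X) : gromovProd x x z = dist x z := by
  simp [gromovProd]

lemma IsDeltaHyperbolic.le_gromovProd {δ : ℝ} (h : IsDeltaHyperbolic X δ) {x y z w : X} {K : ℝ}
    (hx : K ≤ gromovProd x z w) (hy : K ≤ gromovProd y z w) : K - δ ≤ gromovProd x y w :=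
  (sub_le_sub_right (le_min hx hy) δ).trans (h x y z w)

lemma IsDeltaHyperbolic.abs_gromovProd_sub_le {δ : ℝ} (h : IsDeltaHyperbolic X δ) {g x y w : X}
    (hxy : dist g w ≤ gromovProd x y w) :
    |gromovProd g x w - gromovProd g y w| ≤ δ := by
  have hx := (gromovProd_le_dist_left g x w).trans hxy
  have hy := (gromovProd_le_dist_left g y w).trans hxy
  rw [abs_sub_le_iff]
  constructor
  · have := h.le_gromovProd (z := x) le_rfl (hx.trans_eq (gromovProd_comm x y w))
    linarith
  · have := h.le_gromovProd (z := y) le_rfl hy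
    linarith

lemma IsDeltaHyperbolic.gromovProd_bounds_of_branch {δ c t K : ℝ} (h : IsDeltaHyperbolic X δ)
    {o x p g : X}
    (hp : |dist o p - t| ≤ c) (hpx : t - 2 * c ≤ gromovProd p x o)
    (hgo : gromovProd g o p < K) (hgx : gromovProd g x p < K) :
    t - 2 * c - K - δ ≤ gromovProd g x o ∧ gromovProd g x o ≤ t + c + K + δ := by
  have hK := (gromovProd_nonneg g o p).trans_lt hgo
  obtain ⟨hp₁, hp₂⟩ := abs_le.1 hp
  unfold gromovProd at hgo hgx
  constructor
  · refine (h.le_gromovProd (z := p) (K := t - 2 * c - K) ?_ ?_).trans_eq' (by ring)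
    · unfold gromovProd
      linarith [dist_comm g p, dist_comm o p, dist_comm g o]
    · rw [gromovProd_comm]
      linarith
  · have hox := h.le_gromovProd (x := o) (y := x) (z := p) (w := g) (K := dist p g - K)
      (by unfold gromovProd; linarith [dist_comm g p, dist_comm o p, dist_comm g o])
      (by unfold gromovProd; linarith [dist_comm g p, dist_comm x p, dist_comm g x])
    unfold gromovProd at hox ⊢
    linarith [dist_triangle o p g, dist_comm g o, dist_comm x g, dist_comm o x]

end GromovProduct

def IsUniformlyQuasiGeodesic (X : Type*) [MetricSpace X] (c : ℝ) : Prop :=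
  ∀ x y : X, ∃ (a b : ℝ) (γ : ℝ → X), a ≤ b ∧ γ a = x ∧ γ b = y ∧
    IsQuasiGeodesicOn γ (Set.Icc a b) c

lemma IsUniformlyQuasiGeodesic.exists_point_toward {X : Type*} [MetricSpace X] {c : ℝ}
    (hqg : IsUniformlyQuasiGeodesic X c) (x w : X) {t : ℝ} (ht₀ : 0 ≤ t)
    (ht : t ≤ dist x w - c) :
    ∃ p : X, |dist x p - t| ≤ c ∧ t - 2 * c ≤ gromovProd p w x := by
  obtain ⟨α, β, γ, hαβ, rfl, rfl, hγ⟩ := hqg x w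
  have hα : α ∈ Icc α β := ⟨le_rfl, hαβ⟩
  have hβ : β ∈ Icc α β := ⟨hαβ, le_rfl⟩
  have hc : 0 ≤ c := by simpa using (hγ α hα α hα).2
  have hαw := hγ α hα β hβ
  rw [abs_of_nonpos (by linarith)] at hαw
  have hu : α + t ∈ Icc α β := ⟨by linarith, by linarith⟩
  have hαp := hγ α hα (α + t) hu
  have hpw := (hγ (α + t) hu β hβ).2
  rw [show α - (α + t) = -t by ring, abs_neg, abs_of_nonneg ht₀] at hαp
  rw [abs_of_nonpos (by linarith [hu.2])] at hpw
  refine ⟨γ (α + t), abs_sub_le_iff.2 ⟨by linarith, by linarith⟩, ?_⟩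
  unfold gromovProd
  linarith [dist_comm (γ α) (γ (α + t)), dist_comm (γ α) (γ β)]

lemma abs_liminf_sub_le {u : ℕ → ℝ} {a ε : ℝ} (h : ∀ᶠ n in atTop, |u n - a| ≤ ε) :
    |liminf u atTop - a| ≤ ε := by
  have hlo : ∀ᶠ n in atTop, a - ε ≤ u n := h.mono fun n hn => by linarith [abs_le.1 hn]
  have hhi : ∀ᶠ n in atTop, u n ≤ a + ε := h.mono fun n hn => by linarith [abs_le.1 hn]
  have h₁ := le_liminf_of_le (isCoboundedUnder_ge_of_eventually_le atTop hhi) hlo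
  have h₂ := liminf_le_of_frequently_le hhi.frequently ⟨a - ε, by simpa using hlo⟩
  exact abs_sub_le_iff.2 ⟨by linarith, by linarith⟩

lemma IsGromovSeq.exists_abs_horofn_sub_le {Γ : Type*} [Group Γ] [MetricSpace Γ] {q : ℕ → Γ}
    (hq : IsGromovSeq 1 q) {δ : ℝ} (hhyp : IsDeltaHyperbolic Γ δ) (R : ℝ) :
    ∃ x : Γ, R ≤ dist 1 x ∧ ∀ g : Γ, dist 1 g ≤ R →
      |horofn q g - (dist 1 g - 2 * gromovProd g x 1)| ≤ 2 * δ := by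
  obtain ⟨⟨n₁, n₂⟩, hn⟩ := eventually_atTop.1 (hq.eventually_ge_atTop R)
  set n := max n₁ n₂
  have hfar : ∀ m ≥ n, R ≤ gromovProd (q n) (q m) 1 := fun m hm =>
    hn (n, m) (Prod.mk_le_mk.2 ⟨le_max_left _ _, (le_max_right _ _).trans hm⟩)
  refine ⟨q n, by simpa [gromovProd_self, dist_comm] using hfar n le_rfl, fun g hg => ?_⟩
  refine abs_liminf_sub_le ((eventually_ge_atTop n).mono fun m hm => ?_)
  have hδ := hhyp.abs_gromovProd_sub_le (g := g) (by rw [dist_comm]; exact hg.trans (hfar m hm))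
  have hgm : dist g (q m) - dist (q m) 1 - (dist 1 g - 2 * gromovProd g (q n) 1)
      = 2 * (gromovProd g (q n) 1 - gromovProd g (q m) 1) := by
    simp only [gromovProd, dist_comm g 1]
    ring
  rw [hgm, abs_mul, abs_two]
  linarith

def HasExpGrowth (X : Type*) [MetricSpace X] (v C₀ : ℝ) : Prop :=
  ∀ (g : X) (r : ℝ), 0 < r →
    C₀⁻¹ * Real.exp (v * r) ≤ (Nat.card ↥(closedBall g r) : ℝ) ∧
    (Nat.card ↥(closedBall g r) : ℝ) ≤ C₀ * Real.exp (v * r)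

section Counting

variable {X : Type*} [MetricSpace X] {v C₀ : ℝ}

lemma ncard_le_of_subset_closedBall (hproper : ∀ (g : X) (r : ℝ), (closedBall g r).Finite)
    (hgrowth : HasExpGrowth X v C₀) {S : Set X} {z : X} {R : ℝ} (hR : 0 < R)
    (hS : S ⊆ closedBall z R) : (S.ncard : ℝ) ≤ C₀ * Real.exp (v * R) :=
  calc (S.ncard : ℝ) ≤ (closedBall z R).ncard := by exact_mod_cast ncard_le_ncard hS (hproper z R)
    _ = Nat.card ↥(closedBall z R) := by rw [Nat.card_coe_set_eq]
    _ ≤ C₀ * Real.exp (v * R) := (hgrowth z R hR).2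

lemma ncard_shadow_le {δ c : ℝ} (hproper : ∀ (g : X) (r : ℝ), (closedBall g r).Finite)
    (hhyp : IsDeltaHyperbolic X δ) (hqg : IsUniformlyQuasiGeodesic X c)
    (hgrowth : HasExpGrowth X v C₀) (hδ : 0 ≤ δ) (hc : 0 ≤ c) (o w : X) {ρ K : ℝ} (hK : 0 ≤ K)
    (hR : 0 < ρ - K + (5 * c + 2 * δ)) :
    ({u | dist o u ≤ ρ ∧ K ≤ gromovProd u w o}.ncard : ℝ)
      ≤ C₀ * Real.exp (v * (ρ - K + (5 * c + 2 * δ))) := by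
  suffices ∃ z, ∀ u, dist o u ≤ ρ → K ≤ gromovProd u w o →
      dist z u ≤ ρ - K + (5 * c + 2 * δ) by
    obtain ⟨z, hz⟩ := this
    exact ncard_le_of_subset_closedBall hproper hgrowth hR
      fun u hu => mem_closedBall'.2 (hz u hu.1 hu.2)
  by_cases hw : dist o w < K + c
  · refine ⟨w, fun u hu hKu => ?_⟩
    unfold gromovProd at hKu
    linarith [dist_comm u o, dist_comm w o, dist_comm u w]
  · obtain ⟨p, hp, hpw⟩ := hqg.exists_point_toward o w hK (by linarith)
    refine ⟨p, fun u hu hKu => ?_⟩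
    have hup := hhyp.le_gromovProd (x := u) (y := p) (K := K - 2 * c) (by linarith) hpw
    unfold gromovProd at hup
    linarith [abs_le.1 hp, dist_comm u o, dist_comm p o, dist_comm u p]

lemma le_ncard_annulus (hproper : ∀ (g : X) (r : ℝ), (closedBall g r).Finite)
    (hgrowth : HasExpGrowth X v C₀) (o : X) {ρ b : ℝ} (hρ : 0 < ρ) (hρb : 0 < ρ - b) :
    C₀⁻¹ * Real.exp (v * ρ) - C₀ * Real.exp (v * (ρ - b))
      ≤ ({u | ρ - b < dist o u ∧ dist o u ≤ ρ}.ncard : ℝ) := by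
  set A := {u | ρ - b < dist o u ∧ dist o u ≤ ρ}
  have hsplit : closedBall o ρ ⊆ A ∪ closedBall o (ρ - b) := fun u hu => by
    rw [mem_closedBall'] at hu
    by_cases h : dist o u ≤ ρ - b
    · exact Or.inr (mem_closedBall'.2 h)
    · exact Or.inl ⟨not_le.1 h, hu⟩
  have hA : A.Finite := (hproper o ρ).subset fun u hu => mem_closedBall'.2 hu.2
  have hcard : ((closedBall o ρ).ncard : ℝ) ≤ A.ncard + (closedBall o (ρ - b)).ncard := by
    exact_mod_cast (ncard_le_ncard hsplit (hA.union (hproper o _))).trans (ncard_union_le _ _)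
  have hball := (hgrowth o ρ hρ).1
  have hinner := ncard_le_of_subset_closedBall hproper hgrowth hρb (subset_refl (closedBall o _))
  rw [Nat.card_coe_set_eq] at hball
  linarith

lemma le_ncard_annulus_diff_shadows {δ c : ℝ} (hproper : ∀ (g : X) (r : ℝ), (closedBall g r).Finite)
    (hhyp : IsDeltaHyperbolic X δ) (hqg : IsUniformlyQuasiGeodesic X c)
    (hgrowth : HasExpGrowth X v C₀) (hC₀ : 0 < C₀) (hv : 0 ≤ v) (hδ : 0 ≤ δ) (hc : 0 ≤ c)
    (o w₁ w₂ : X) {ρ K : ℝ} (hK : 8 * C₀ ^ 2 ≤ Real.exp (v * (K - (5 * c + 2 * δ))))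
    (hK₀ : 0 ≤ K) (hKρ : K < ρ) :
    C₀⁻¹ / 4 * Real.exp (v * ρ) ≤ ({u | ρ - K < dist o u ∧ dist o u ≤ ρ ∧
      gromovProd u w₁ o < K ∧ gromovProd u w₂ o < K}.ncard : ℝ) := by
  have hsmall : ∀ s, 8 * C₀ ^ 2 ≤ Real.exp (v * s) →
      C₀ * Real.exp (v * (ρ - s)) ≤ C₀⁻¹ / 8 * Real.exp (v * ρ) := fun s hs => by
    rw [mul_sub, Real.exp_sub, mul_div_assoc', div_le_iff₀ (Real.exp_pos _)]
    have := mul_le_mul_of_nonneg_left hs (by positivity : 0 ≤ C₀⁻¹ / 8 * Real.exp (v * ρ))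
    convert this using 1
    field_simp
  set U := {u | ρ - K < dist o u ∧ dist o u ≤ ρ ∧ gromovProd u w₁ o < K ∧ gromovProd u w₂ o < K}
  set Sh : X → Set X := fun w => {u | dist o u ≤ ρ ∧ K ≤ gromovProd u w o}
  have hfin : ∀ S : Set X, (∀ u ∈ S, dist o u ≤ ρ) → S.Finite := fun S hS =>
    (hproper o ρ).subset fun u hu => mem_closedBall'.2 (hS u hu)
  have hcover : {u | ρ - K < dist o u ∧ dist o u ≤ ρ} ⊆ U ∪ Sh w₁ ∪ Sh w₂ := by
    rintro u ⟨hu₁, hu₂⟩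
    by_cases h₁ : K ≤ gromovProd u w₁ o
    · exact Or.inl (Or.inr ⟨hu₂, h₁⟩)
    by_cases h₂ : K ≤ gromovProd u w₂ o
    · exact Or.inr ⟨hu₂, h₂⟩
    exact Or.inl (Or.inl ⟨hu₁, hu₂, not_le.1 h₁, not_le.1 h₂⟩)
  have hcard : ({u | ρ - K < dist o u ∧ dist o u ≤ ρ}.ncard : ℝ)
      ≤ U.ncard + (Sh w₁).ncard + (Sh w₂).ncard := by
    have hU := hfin U fun u hu => hu.2.1
    have hSh := fun w => hfin (Sh w) fun u hu => hu.1
    exact_mod_cast (ncard_le_ncard hcover ((hU.union (hSh w₁)).union (hSh w₂))).trans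
      ((ncard_union_le _ _).trans (Nat.add_le_add_right (ncard_union_le _ _) _))
  have hann := le_ncard_annulus hproper hgrowth o (hK₀.trans_lt hKρ) (sub_pos.2 hKρ)
  have hexpK : 8 * C₀ ^ 2 ≤ Real.exp (v * K) :=
    hK.trans (Real.exp_le_exp.2 (mul_le_mul_of_nonneg_left (by linarith) hv))
  have hsh : ∀ w, ((Sh w).ncard : ℝ) ≤ C₀⁻¹ / 8 * Real.exp (v * ρ) := fun w => by
    have h := hsmall _ hK
    rw [← sub_add] at h
    exact (ncard_shadow_le hproper hhyp hqg hgrowth hδ hc o w hK₀ (by linarith)).trans h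
  linarith [hsmall K hexpK, hsh w₁, hsh w₂]

end Counting

section Horoshell

variable {Γ : Type*} [Group Γ] [MetricSpace Γ]

def annulusHoroshell (q : ℕ → Γ) (a T₁ T₂ r : ℝ) : Set Γ :=
  {g | r - a < dist 1 g ∧ dist 1 g ≤ r ∧ T₁ ≤ horofn q g ∧ horofn q g ≤ T₂}

lemma gromovProd_mul_left (hleft : ∀ g x y : Γ, dist (g * x) (g * y) = dist x y) (g x y z : Γ) :
    gromovProd (g * x) (g * y) (g * z) = gromovProd x y z := by
  simp only [gromovProd, hleft]

lemma mul_mem_annulusHoroshell (hleft : ∀ g x y : Γ, dist (g * x) (g * y) = dist x y)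
    {δ c : ℝ} (hhyp : IsDeltaHyperbolic Γ δ) {q : ℕ → Γ} {x p u : Γ} {t ρ K a T₁ T₂ r : ℝ}
    (hx : ∀ g : Γ, dist 1 g ≤ r → |horofn q g - (dist 1 g - 2 * gromovProd g x 1)| ≤ 2 * δ)
    (hp : |dist 1 p - t| ≤ c) (hpx : t - 2 * c ≤ gromovProd p x 1)
    (hu : ρ - K < dist 1 u ∧ dist 1 u ≤ ρ ∧
      gromovProd u p⁻¹ 1 < K ∧ gromovProd u (p⁻¹ * x) 1 < K)
    (hr : t + c + ρ = r) (hT₂ : ρ - t = T₂ - (2 * K + 5 * c + 4 * δ)) (ha : 3 * K + 2 * c ≤ a)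
    (hT : 7 * K + 8 * c + 8 * δ ≤ T₂ - T₁) :
    p * u ∈ annulusHoroshell q a T₁ T₂ r := by
  obtain ⟨hu₁, hu₂, hu₃, hu₄⟩ := hu
  have hpg : dist p (p * u) = dist 1 u := by simpa using hleft p 1 u
  have hgo : gromovProd (p * u) 1 p = gromovProd u p⁻¹ 1 := by
    simpa using gromovProd_mul_left hleft p u p⁻¹ 1
  have hgx : gromovProd (p * u) x p = gromovProd u (p⁻¹ * x) 1 := by
    simpa using gromovProd_mul_left hleft p u (p⁻¹ * x) 1
  obtain ⟨hlo, hhi⟩ := hhyp.gromovProd_bounds_of_branch hp hpx (hgo ▸ hu₃) (hgx ▸ hu₄)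
  obtain ⟨hp₁, hp₂⟩ := abs_le.1 hp
  have hle : dist 1 (p * u) ≤ r := by linarith [dist_triangle 1 p (p * u)]
  have hgt : t - c + ρ - 3 * K < dist 1 (p * u) := by
    rw [← hgo] at hu₃
    unfold gromovProd at hu₃
    linarith [dist_comm (p * u) p, dist_comm (p * u) 1, dist_comm 1 p]
  obtain ⟨hh₁, hh₂⟩ := abs_le.1 (hx _ hle)
  exact ⟨by linarith, hle, by linarith, by linarith⟩

theorem le_ncard_annulusHoroshell (hleft : ∀ g x y : Γ, dist (g * x) (g * y) = dist x y)
    {δ c v C₀ : ℝ} (hproper : ∀ (g : Γ) (r : ℝ), (closedBall g r).Finite)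
    (hhyp : IsDeltaHyperbolic Γ δ) (hqg : IsUniformlyQuasiGeodesic Γ c)
    (hgrowth : HasExpGrowth Γ v C₀) (hC₀ : 0 < C₀) (hv : 0 ≤ v) (hδ : 0 ≤ δ) (hc : 0 ≤ c)
    {q : ℕ → Γ} (hq : IsGromovSeq 1 q) {K a T₁ T₂ r : ℝ}
    (hK : 8 * C₀ ^ 2 ≤ Real.exp (v * (K - (5 * c + 2 * δ)))) (hK₀ : 0 ≤ K)
    (ha : 3 * K + 2 * c ≤ a) (hT : 7 * K + 8 * c + 8 * δ ≤ T₂ - T₁) (hT₂ : T₂ ≤ r + 2 * c)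
    (hrT : 4 * K + 6 * c + 4 * δ < r + T₂) :
    (4 * C₀ * Real.exp (v * (K + 3 * c + 2 * δ)))⁻¹ * Real.exp (v * (r + T₂) / 2)
      ≤ ((annulusHoroshell q a T₁ T₂ r).ncard : ℝ) := by
  set ρ := (r + T₂) / 2 - (K + 3 * c + 2 * δ) with hρ
  set t := (r - T₂) / 2 + (K + 2 * c + 2 * δ) with ht
  obtain ⟨x, hxr, hx⟩ := hq.exists_abs_horofn_sub_le hhyp r
  obtain ⟨p, hp, hpx⟩ := hqg.exists_point_toward 1 x (t := t) (by linarith) (by linarith)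
  have hU := le_ncard_annulus_diff_shadows hproper hhyp hqg hgrowth hC₀ hv hδ hc 1 p⁻¹ (p⁻¹ * x)
    hK hK₀ (show K < ρ by linarith)
  have hfin : (annulusHoroshell q a T₁ T₂ r).Finite :=
    (hproper 1 r).subset fun g hg => mem_closedBall'.2 hg.2.1
  have hinj := ncard_le_ncard_of_injOn (p * ·)
    (fun u hu => mul_mem_annulusHoroshell (ρ := ρ) hleft hhyp hx hp hpx hu (by linarith)
      (by linarith) ha hT)
    (mul_right_injective p).injOn hfin
  have hexp : Real.exp (v * (r + T₂) / 2)
      = Real.exp (v * ρ) * Real.exp (v * (K + 3 * c + 2 * δ)) := by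
    rw [← Real.exp_add, hρ]
    ring_nf
  calc (4 * C₀ * Real.exp (v * (K + 3 * c + 2 * δ)))⁻¹ * Real.exp (v * (r + T₂) / 2)
      = C₀⁻¹ / 4 * Real.exp (v * ρ) := by
        rw [hexp]
        field_simp
    _ ≤ _ := hU
    _ ≤ _ := by exact_mod_cast hinj

theorem ncard_annulusHoroshell_le {δ c v C₀ : ℝ}
    (hproper : ∀ (g : Γ) (r : ℝ), (closedBall g r).Finite)
    (hhyp : IsDeltaHyperbolic Γ δ) (hqg : IsUniformlyQuasiGeodesic Γ c)
    (hgrowth : HasExpGrowth Γ v C₀) (hδ : 0 ≤ δ) (hc : 0 ≤ c)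
    {q : ℕ → Γ} (hq : IsGromovSeq 1 q) {a T₁ T₂ r : ℝ} (hrT : 0 < r + T₂) :
    ((annulusHoroshell q a T₁ T₂ r).ncard : ℝ)
      ≤ C₀ * Real.exp (v * (5 * c + 4 * δ)) * Real.exp (v * (r + T₂) / 2) := by
  suffices ∃ z, annulusHoroshell q a T₁ T₂ r ⊆ closedBall z ((r + T₂) / 2 + (5 * c + 4 * δ)) by
    obtain ⟨z, hz⟩ := this
    calc ((annulusHoroshell q a T₁ T₂ r).ncard : ℝ)
        ≤ C₀ * Real.exp (v * ((r + T₂) / 2 + (5 * c + 4 * δ))) :=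
          ncard_le_of_subset_closedBall hproper hgrowth (by positivity) hz
      _ = _ := by
        rw [mul_add, Real.exp_add]
        ring_nf
  by_cases hT₂ : r < T₂
  · exact ⟨1, fun g hg => mem_closedBall'.2 (by linarith [hg.2.1])⟩
  set t := (r - T₂) / 2 with ht
  obtain ⟨x, hxr, hx⟩ := hq.exists_abs_horofn_sub_le hhyp (r + c)
  obtain ⟨p, hp, hpx⟩ := hqg.exists_point_toward 1 x (t := t) (by linarith) (by linarith)
  refine ⟨p, fun g hg => mem_closedBall'.2 ?_⟩
  obtain ⟨-, hg, -, hgT⟩ := hg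
  have hgx : (dist 1 g - T₂) / 2 - δ ≤ gromovProd g x 1 := by
    linarith [abs_le.1 (hx g (by linarith))]
  have hgp := hhyp g p x 1
  obtain ⟨hp₁, hp₂⟩ := abs_le.1 hp
  have hdist : dist p g = dist 1 g + dist 1 p - 2 * gromovProd g p 1 := by
    unfold gromovProd
    linarith [dist_comm g 1, dist_comm p 1, dist_comm g p]
  rcases min_cases (gromovProd g x 1) (gromovProd p x 1) with ⟨hm, -⟩ | ⟨hm, -⟩ <;>
    rw [hm] at hgp <;> linarith

end Horoshell

theorem stmt17_general {Γ : Type} [Group Γ] [MetricSpace Γ]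
    (δ c v C₀ : ℝ) (hδ : 0 < δ) (hc : 0 < c) (hv : 0 < v) (hC₀ : 0 < C₀)
    (hleft : ∀ g x y : Γ, dist (g * x) (g * y) = dist x y)
    (hproper : ∀ (g : Γ) (r : ℝ), (closedBall g r).Finite)
    (hhyp : IsDeltaHyperbolic Γ δ)
    (hqg : ∀ x y : Γ, ∃ (a b : ℝ) (γ : ℝ → Γ), a ≤ b ∧ γ a = x ∧ γ b = y ∧
      IsQuasiGeodesicOn γ (Set.Icc a b) c)
    (hgrowth : ∀ (g : Γ) (r : ℝ), 0 < r →
      C₀⁻¹ * Real.exp (v * r) ≤ (Nat.card ↥(closedBall g r) : ℝ) ∧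
      (Nat.card ↥(closedBall g r) : ℝ) ≤ C₀ * Real.exp (v * r)) :
    ∃ a₀ T₀ : ℝ, 0 < a₀ ∧ 0 < T₀ ∧ ∃ C₁ : ℝ, 1 ≤ C₁ ∧
      ∀ q : ℕ → Γ, IsGromovSeq (1 : Γ) q →
        ∀ a T₁ T₂ r : ℝ, a₀ ≤ a → T₀ ≤ T₂ - T₁ → 0 < r → max |T₁| |T₂| - 2 * c ≤ r →
          C₁⁻¹ * Real.exp (v * (r + T₂) / 2) ≤
            (Nat.card ↥{g : Γ | r - a < dist (1 : Γ) g ∧ dist (1 : Γ) g ≤ r ∧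
              T₁ ≤ horofn q g ∧ horofn q g ≤ T₂} : ℝ) ∧
          (Nat.card ↥{g : Γ | r - a < dist (1 : Γ) g ∧ dist (1 : Γ) g ≤ r ∧
              T₁ ≤ horofn q g ∧ horofn q g ≤ T₂} : ℝ) ≤
            C₁ * Real.exp (v * (r + T₂) / 2) := by
  obtain ⟨K, hK₀, hK⟩ : ∃ K : ℝ, 0 < K ∧ 8 * C₀ ^ 2 ≤ Real.exp (v * (K - (5 * c + 2 * δ))) :=
    ⟨5 * c + 2 * δ + 8 * C₀ ^ 2 / v, by positivity, by
      rw [add_sub_cancel_left, mul_div_cancel₀ _ hv.ne']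
      linarith [Real.add_one_le_exp (8 * C₀ ^ 2)]⟩
  set C₁ := max 1 (4 * C₀ * Real.exp (v * (K + 5 * c + 4 * δ)))
  refine ⟨3 * K + 2 * c, 7 * K + 8 * c + 8 * δ, by positivity, by positivity, C₁, le_max_left _ _,
    fun q hq a T₁ T₂ r ha hT hr hmax => ?_⟩
  have hT₁ : -(r + 2 * c) ≤ T₁ := by linarith [neg_abs_le T₁, le_max_left |T₁| |T₂|]
  have hT₂ : T₂ ≤ r + 2 * c := by linarith [le_abs_self T₂, le_max_right |T₁| |T₂|]
  simp only [Nat.card_coe_set_eq]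
  constructor
  · refine le_trans ?_ (le_ncard_annulusHoroshell hleft hproper hhyp hqg hgrowth hC₀ hv.le hδ.le
      hc.le hq hK hK₀.le ha hT hT₂ (by linarith))
    gcongr
    exact le_max_of_le_right (by gcongr <;> linarith)
  · refine le_trans
      (ncard_annulusHoroshell_le hproper hhyp hqg hgrowth hδ.le hc.le hq (by linarith)) ?_
    gcongr
    exact le_max_of_le_right (by gcongr <;> linarith)

/-- Lemma 5.4 / Lemma `vol2` of the paper: in a proper, δ-hyperbolic,
uniformly `(1,c)`-quasi-geodesic group with exponential ball growth `|B(g,r)| ≍ e^{vr}`,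
the cardinality of the intersection of the annulus `S(e;r−a,r)` with the horoshell
`{T₁ ≤ h ≤ T₂}` is comparable to `e^{v(r+T₂)/2}`, uniformly in the horofunction,
provided `a ≥ a₀`. -/
theorem stmt17 {Γ : Type} [Group Γ] [Countable Γ] [MetricSpace Γ]
    (δ c v C₀ : ℝ) (hδ : 0 < δ) (hc : 0 < c) (hv : 0 < v) (hC₀ : 0 < C₀)
    (hleft : ∀ g x y : Γ, dist (g * x) (g * y) = dist x y)
    (hproper : ∀ (g : Γ) (r : ℝ), (closedBall g r).Finite)
    (hhyp : IsDeltaHyperbolic Γ δ)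
    (hqg : ∀ x y : Γ, ∃ (a b : ℝ) (γ : ℝ → Γ), a ≤ b ∧ γ a = x ∧ γ b = y ∧
      IsQuasiGeodesicOn γ (Set.Icc a b) c)
    (hgrowth : ∀ (g : Γ) (r : ℝ), 0 < r →
      C₀⁻¹ * Real.exp (v * r) ≤ (Nat.card ↥(closedBall g r) : ℝ) ∧
      (Nat.card ↥(closedBall g r) : ℝ) ≤ C₀ * Real.exp (v * r)) :
    ∃ a₀ T₀ : ℝ, 0 < a₀ ∧ 0 < T₀ ∧ ∃ C₁ : ℝ, 1 ≤ C₁ ∧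
      ∀ q : ℕ → Γ, IsGromovSeq (1 : Γ) q →
        ∀ a T₁ T₂ r : ℝ, a₀ ≤ a → T₀ ≤ T₂ - T₁ → 0 < r → max |T₁| |T₂| - 2 * c ≤ r →
          C₁⁻¹ * Real.exp (v * (r + T₂) / 2) ≤
            (Nat.card ↥{g : Γ | r - a < dist (1 : Γ) g ∧ dist (1 : Γ) g ≤ r ∧
              T₁ ≤ horofn q g ∧ horofn q g ≤ T₂} : ℝ) ∧
          (Nat.card ↥{g : Γ | r - a < dist (1 : Γ) g ∧ dist (1 : Γ) g ≤ r ∧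
              T₁ ≤ horofn q g ∧ horofn q g ≤ T₂} : ℝ) ≤
            C₁ * Real.exp (v * (r + T₂) / 2) :=
  stmt17_general δ c v C₀ hδ hc hv hC₀ hleft hproper hhyp hqg hgrowth
end
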